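/- arXiv:math/0603033 — 7 statements merged into one kernel-verified Lean document; each statement's English description precedes it below -/
import Mathlib

section
/- Let m, n be positive integers, X a finite set, and φ_{i,j} : X → ℂ functions for 1 ≤ i ≤ 2m, 1 ≤ j ≤ n. Define M(i_1,...,i_{2m}) = ∑_{x ∈ X} φ_{1,i_1}(x)·φ_{2,i_2}(x)···φ_{2m,i_{2m}}(x). Then (1/n!) ∑_{(x_1,...,x_n) ∈ X^n} ∏_{i=1}^{2m} det(φ_{i,j}(x_k))_{1≤j,k≤n} = Det^{[2m]}(M), where Det^{[2m]}(M) = (1/n!) ∑_{σ_1,...,σ_{2m} ∈ S_n} sgn(σ_1)···sgn(σ_{2m}) ∏_{i=1}^n M(σ_1(i),...,σ_{2m}(i)). -/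
open Finset

noncomputable section

/-- sign of a permutation, cast into a commutative ring -/
def psgn {R : Type*} [CommRing R] {α : Type*} [DecidableEq α] [Fintype α]
    (σ : Equiv.Perm α) : R := ((Equiv.Perm.sign σ : ℤ) : R)

/-- Cayley's hyperdeterminant `Det^[2m]` of a `2m`-dimensional array of side `n`. -/
def hdet {R : Type*} [CommRing R] [Algebra ℂ R] (m n : ℕ)
    (A : (Fin (2*m) → Fin n) → R) : R :=
  ((n.factorial : ℂ)⁻¹) • ∑ σ : Fin (2*m) → Equiv.Perm (Fin n),
    (∏ t, psgn (σ t)) * ∏ i, A (fun t => σ t i)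

/-- position `2i-1` (1-based), i.e. `2i` (0-based) -/
def lo {n : ℕ} (i : Fin n) : Fin (2*n) := ⟨2*i.1, by have := i.2; omega⟩
/-- position `2i` (1-based), i.e. `2i+1` (0-based) -/
def hi {n : ℕ} (i : Fin n) : Fin (2*n) := ⟨2*i.1+1, by have := i.2; omega⟩

/-- the set `E_{2n}` of permutations with `σ(2i-1) < σ(2i)` -/
def Eset (n : ℕ) : Finset (Equiv.Perm (Fin (2*n))) :=
  Finset.univ.filter (fun σ => ∀ i : Fin n, σ (lo i) < σ (hi i))

/-- the hyperpfaffian `Pf^[2m]` of a `2m`-dimensional array of side `2n`. -/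
def hpf {R : Type*} [CommRing R] [Algebra ℂ R] (m n : ℕ)
    (B : (Fin (2*m) → Fin (2*n)) → R) : R :=
  ((n.factorial : ℂ)⁻¹) • ∑ σ ∈ Fintype.piFinset (fun _ : Fin m => Eset n),
    (∏ s, psgn (σ s)) *
      ∏ i : Fin n, B (fun t => σ ⟨t.1/2, by have := t.2; omega⟩
        (if t.1 % 2 = 0 then lo i else hi i))

/-- the pfaffian of a `2n × 2n` matrix (agreeing with the usual pfaffian on
alternating matrices) -/
def pfn {R : Type*} [CommRing R] [Algebra ℂ R] (n : ℕ)
    (M : Matrix (Fin (2*n)) (Fin (2*n)) R) : R :=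
  ((n.factorial : ℂ)⁻¹) • ∑ σ ∈ Eset n, psgn σ * ∏ i : Fin n, M (σ (lo i)) (σ (hi i))

/-- Cauchy–Binet type formula for hyperdeterminants (summation form over a finite set):
`(1/n!) ∑_{x ∈ X^n} ∏_{i=1}^{2m} det(φ_{i,j}(x_k)) = Det^[2m](M)` where
`M(i_1,…,i_{2m}) = ∑_{x∈X} φ_{1,i_1}(x)⋯φ_{2m,i_{2m}}(x)`. -/
theorem cauchy_binet_hyperdeterminant (m n : ℕ) (hm : 0 < m) (hn : 0 < n)
    (X : Type*) [Fintype X] (φ : Fin (2*m) → Fin n → X → ℂ)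
    (M : (Fin (2*m) → Fin n) → ℂ)
    (hM : ∀ v : Fin (2*m) → Fin n, M v = ∑ x : X, ∏ t : Fin (2*m), φ t (v t) x) :
    ((n.factorial : ℂ)⁻¹) * ∑ x : Fin n → X,
        ∏ t : Fin (2*m), Matrix.det (Matrix.of fun j k : Fin n => φ t j (x k))
      = hdet m n M := by
  classical
  unfold hdet psgn
  rw [smul_eq_mul]
  congr 1
  calc
    ∑ x : Fin n → X, ∏ t : Fin (2*m), Matrix.det (Matrix.of fun j k : Fin n => φ t j (x k))
        = ∑ x : Fin n → X, ∑ σ : Fin (2*m) → Equiv.Perm (Fin n),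
            ∏ t, (((Equiv.Perm.sign (σ t) : ℤ) : ℂ) * ∏ k, φ t (σ t k) (x k)) := by
        refine Finset.sum_congr rfl fun x _ => ?_
        simp_rw [Matrix.det_apply']
        rw [Finset.prod_univ_sum, Fintype.piFinset_univ]
        rfl
    _ = ∑ σ : Fin (2*m) → Equiv.Perm (Fin n), ∑ x : Fin n → X,
          (∏ t, ((Equiv.Perm.sign (σ t) : ℤ) : ℂ)) * ∏ i : Fin n, ∏ t, φ t (σ t i) (x i) := by
        rw [Finset.sum_comm]
        refine Finset.sum_congr rfl fun σ _ => Finset.sum_congr rfl fun x _ => ?_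
        rw [Finset.prod_mul_distrib, Finset.prod_comm]
    _ = ∑ σ : Fin (2*m) → Equiv.Perm (Fin n),
          (∏ t, ((Equiv.Perm.sign (σ t) : ℤ) : ℂ)) * ∏ i, M (fun t => σ t i) := by
        refine Finset.sum_congr rfl fun σ _ => ?_
        rw [← Finset.mul_sum]
        congr 1
        calc ∑ x : Fin n → X, ∏ i : Fin n, ∏ t, φ t (σ t i) (x i)
            = ∏ i : Fin n, ∑ x : X, ∏ t, φ t (σ t i) x := by
              rw [Finset.prod_univ_sum, Fintype.piFinset_univ]
          _ = ∏ i : Fin n, M (fun t => σ t i) :=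
              Finset.prod_congr rfl fun i _ => (hM _).symm

end
end

section
/- Let m, n be positive integers, X a finite set, and φ_{i,j} : X → ℂ functions for 1 ≤ i ≤ m, 1 ≤ j ≤ n. Then (1/n!) ∑_{(x_1,...,x_n) ∈ X^n} ∏_{i=1}^m per(φ_{i,j}(x_k))_{1≤j,k≤n} = Per^{[m]}(N), where N(i_1,...,i_m) = ∑_{x ∈ X} ∏_{k=1}^m φ_{k,i_k}(x), per denotes the permanent, and Per^{[m]}(N) = (1/n!) ∑_{σ_1,...,σ_m ∈ S_n} ∏_{i=1}^n N(σ_1(i),...,σ_m(i)) is the hyperpermanent. -/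
open Finset

noncomputable section

/-- the permanent of a square matrix -/
def perm {n : ℕ} (M : Matrix (Fin n) (Fin n) ℂ) : ℂ :=
  ∑ σ : Equiv.Perm (Fin n), ∏ i, M (σ i) i

/-- the hyperpermanent `Per^[m]` of an `m`-dimensional array of side `n` -/
def hper (m n : ℕ) (A : (Fin m → Fin n) → ℂ) : ℂ :=
  ((n.factorial : ℂ)⁻¹) * ∑ σ : Fin m → Equiv.Perm (Fin n),
    ∏ i, A (fun t => σ t i)

/-- Cauchy–Binet type formula for hyperpermanents over a finite set. -/
theorem cauchy_binet_hyperpermanent (m n : ℕ) (hm : 0 < m) (hn : 0 < n)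
    (X : Type*) [Fintype X] (φ : Fin m → Fin n → X → ℂ)
    (N : (Fin m → Fin n) → ℂ)
    (hN : ∀ v : Fin m → Fin n, N v = ∑ x : X, ∏ t : Fin m, φ t (v t) x) :
    ((n.factorial : ℂ)⁻¹) * ∑ x : Fin n → X,
        ∏ t : Fin m, perm (Matrix.of fun j k : Fin n => φ t j (x k))
      = hper m n N := by
  simp only [hper, hN, perm, Matrix.of_apply]
  congr 1
  calc ∑ x : Fin n → X, ∏ t : Fin m, ∑ σ : Equiv.Perm (Fin n), ∏ i, φ t (σ i) (x i)
      = ∑ x : Fin n → X, ∑ σ : Fin m → Equiv.Perm (Fin n),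
          ∏ t, ∏ i, φ t (σ t i) (x i) := by
        refine Finset.sum_congr rfl fun x _ => ?_
        rw [Finset.prod_univ_sum, Fintype.piFinset_univ]
    _ = ∑ σ : Fin m → Equiv.Perm (Fin n), ∑ x : Fin n → X,
          ∏ i, ∏ t, φ t (σ t i) (x i) := by
        rw [Finset.sum_comm]
        exact Finset.sum_congr rfl fun σ _ =>
          Finset.sum_congr rfl fun x _ => Finset.prod_comm
    _ = ∑ σ : Fin m → Equiv.Perm (Fin n), ∏ i : Fin n, ∑ y : X,
          ∏ t, φ t (σ t i) y := by
        refine Finset.sum_congr rfl fun σ _ => ?_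
        rw [Finset.prod_univ_sum, Fintype.piFinset_univ]

end
end

section
/- Let m be an odd positive integer, n a positive integer, X a finite linearly ordered set (identified with {0,1,...,N}), ψ_{i,j} : X → ℂ functions for 1 ≤ i ≤ m, 1 ≤ j ≤ 2n, and ε : X × X → ℂ with ε(y,x) = −ε(x,y). Define Q(i_1,...,i_{2m}) = (1/2) ∑_{x,y ∈ X} ε(x,y) ∏_{s=1}^m (ψ_{s,i_{2s−1}}(x)ψ_{s,i_{2s}}(y) − ψ_{s,i_{2s−1}}(y)ψ_{s,i_{2s}}(x)). Then (1/(2n)!) ∑_{(x_1,...,x_{2n}) ∈ X^{2n}} pf(ε(x_i,x_j))_{1≤i,j≤2n} ∏_{s=1}^m det(ψ_{s,j}(x_k))_{1≤j,k≤2n} = Pf^{[2m]}(Q). -/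
open Finset

noncomputable section

variable {n : ℕ}

def pairIdx {n : ℕ} (k : Fin (2*n)) : Fin n := ⟨k.1/2, by have := k.2; omega⟩

lemma lo_ne_hi (i j : Fin n) : lo i ≠ hi j := by
  simp only [lo, hi, Fin.ne_iff_vne]; omega

@[simp] lemma pairIdx_lo (i : Fin n) : pairIdx (lo i) = i := by
  simp only [pairIdx, lo, Fin.ext_iff]; omega
@[simp] lemma pairIdx_hi (i : Fin n) : pairIdx (hi i) = i := by
  simp only [pairIdx, hi, Fin.ext_iff]; omega

lemma lo_or_hi (k : Fin (2*n)) : k = lo (pairIdx k) ∨ k = hi (pairIdx k) := by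
  rcases k with ⟨k, hk⟩
  simp only [lo, hi, pairIdx, Fin.ext_iff]
  omega

def flipFun {n : ℕ} (k : Fin (2*n)) : Fin (2*n) :=
  if h : k.1 % 2 = 0 then ⟨k.1+1, by have := k.2; omega⟩ else ⟨k.1-1, by have := k.2; omega⟩

lemma flipFun_val (k : Fin (2*n)) :
    (flipFun k).1 = if k.1 % 2 = 0 then k.1+1 else k.1-1 := by
  simp only [flipFun]
  split <;> simp [*]

lemma flipFun_invol : Function.Involutive (flipFun (n := n)) := by
  intro k
  have h3 := k.2
  apply Fin.ext
  by_cases h : k.1 % 2 = 0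
  · have e1 : (flipFun k).1 = k.1 + 1 := by rw [flipFun_val, if_pos h]
    rw [flipFun_val, e1, if_neg (by omega)]
    omega
  · have e1 : (flipFun k).1 = k.1 - 1 := by rw [flipFun_val, if_neg h]
    rw [flipFun_val, e1, if_pos (by omega)]
    omega

@[simp] lemma pairIdx_flipFun (k : Fin (2*n)) : pairIdx (flipFun k) = pairIdx k := by
  have h2 := k.2
  apply Fin.ext
  simp only [pairIdx]
  rw [flipFun_val]
  split <;> omega

@[simp] lemma flipFun_lo (i : Fin n) : flipFun (lo i) = hi i := by
  apply Fin.ext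
  rw [flipFun_val]
  simp only [lo, hi]
  exact if_pos (show 2 * i.1 % 2 = 0 by omega)

@[simp] lemma flipFun_hi (i : Fin n) : flipFun (hi i) = lo i := by
  apply Fin.ext
  rw [flipFun_val]
  simp only [lo, hi]
  exact (if_neg (show ¬ ((2 * i.1 + 1) % 2 = 0) by omega)).trans (by omega)

def pflip (S : Finset (Fin n)) : Equiv.Perm (Fin (2*n)) where
  toFun k := if pairIdx k ∈ S then flipFun k else k
  invFun k := if pairIdx k ∈ S then flipFun k else k
  left_inv := by
    intro k; by_cases h : pairIdx k ∈ S <;> simp [h, flipFun_invol k]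
  right_inv := by
    intro k; by_cases h : pairIdx k ∈ S <;> simp [h, flipFun_invol k]

@[simp] lemma pflip_lo (S : Finset (Fin n)) (i : Fin n) :
    pflip S (lo i) = if i ∈ S then hi i else lo i := by
  by_cases h : i ∈ S <;> simp [pflip, Equiv.coe_fn_mk, h]

@[simp] lemma pflip_hi (S : Finset (Fin n)) (i : Fin n) :
    pflip S (hi i) = if i ∈ S then lo i else hi i := by
  by_cases h : i ∈ S <;> simp [pflip, Equiv.coe_fn_mk, h]

@[simp] lemma pflip_pflip (S : Finset (Fin n)) (k : Fin (2*n)) : pflip S (pflip S k) = k := by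
  show (pflip S).toFun ((pflip S).toFun k) = k
  exact (pflip S).left_inv k

lemma pflip_mul_pflip (S : Finset (Fin n)) (τ : Equiv.Perm (Fin (2*n))) :
    (τ * pflip S) * pflip S = τ := by
  ext k; simp [Equiv.Perm.mul_apply]

@[simp] lemma pflip_empty : pflip (∅ : Finset (Fin n)) = 1 := by
  ext k; simp [pflip]

lemma pflip_insert (i : Fin n) (S : Finset (Fin n)) (hiS : i ∉ S) :
    pflip (insert i S) = pflip S * Equiv.swap (lo i) (hi i) := by
  ext k
  obtain ⟨j, hk | hk⟩ : ∃ j, k = lo j ∨ k = hi j := ⟨pairIdx k, lo_or_hi k⟩ <;> subst hk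
  · by_cases h : j = i
    · subst h
      rw [Equiv.Perm.mul_apply, Equiv.swap_apply_left, pflip_lo, pflip_hi,
        if_pos (Finset.mem_insert_self j S), if_neg hiS]
    · have hji : j.1 ≠ i.1 := fun e => h (Fin.ext e)
      have e1 : lo j ≠ lo i := by simp only [ne_eq, lo, Fin.mk.injEq]; omega
      rw [Equiv.Perm.mul_apply, Equiv.swap_apply_of_ne_of_ne e1 (lo_ne_hi j i),
        pflip_lo, pflip_lo]
      simp [Finset.mem_insert, h]
  · by_cases h : j = i
    · subst h
      rw [Equiv.Perm.mul_apply, Equiv.swap_apply_right, pflip_hi, pflip_lo,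
        if_pos (Finset.mem_insert_self j S), if_neg hiS]
    · have hji : j.1 ≠ i.1 := fun e => h (Fin.ext e)
      have e2 : hi j ≠ hi i := by simp only [ne_eq, hi, Fin.mk.injEq]; omega
      rw [Equiv.Perm.mul_apply, Equiv.swap_apply_of_ne_of_ne (Ne.symm (lo_ne_hi i j)) e2,
        pflip_hi, pflip_hi]
      simp [Finset.mem_insert, h]

lemma sign_pflip (S : Finset (Fin n)) :
    Equiv.Perm.sign (pflip S) = (-1) ^ S.card := by
  induction S using Finset.induction with
  | empty => simp
  | @insert a s ha ih =>
    rw [pflip_insert a s ha, map_mul, ih, Equiv.Perm.sign_swap (lo_ne_hi a a),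
      Finset.card_insert_of_notMem ha, pow_add, pow_one]

lemma psgn_mul {R : Type*} [CommRing R] {α : Type*} [DecidableEq α] [Fintype α]
    (σ τ : Equiv.Perm α) : psgn (R := R) (σ * τ) = psgn σ * psgn τ := by
  simp [psgn]

lemma psgn_sq {R : Type*} [CommRing R] {α : Type*} [DecidableEq α] [Fintype α]
    (σ : Equiv.Perm α) : psgn (R := R) σ * psgn σ = 1 := by
  simp only [psgn, ← Int.cast_mul, ← Units.val_mul]
  rcases Int.units_eq_one_or (Equiv.Perm.sign σ) with h | h <;> rw [h] <;> norm_num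

lemma psgn_pflip (S : Finset (Fin n)) : psgn (R := ℂ) (pflip S) = (-1) ^ S.card := by
  rw [psgn, sign_pflip]
  push_cast
  norm_num

lemma psgn_mul_pow_odd {m : ℕ} (hm : Odd m) {α : Type*} [DecidableEq α] [Fintype α]
    (σ : Equiv.Perm α) : psgn (R := ℂ) σ * psgn σ ^ m = 1 := by
  obtain ⟨k, rfl⟩ := hm
  calc psgn (R := ℂ) σ * psgn σ ^ (2*k+1) = (psgn σ * psgn σ)^(k+1) := by ring
  _ = 1 := by rw [psgn_sq, one_pow]

lemma mem_Eset {σ : Equiv.Perm (Fin (2*n))} :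
    σ ∈ Eset n ↔ ∀ i : Fin n, σ (lo i) < σ (hi i) := by
  simp [Eset]

def Sof (τ : Equiv.Perm (Fin (2*n))) : Finset (Fin n) :=
  Finset.univ.filter (fun i => τ (hi i) < τ (lo i))

lemma mul_pflip_Sof_mem (τ : Equiv.Perm (Fin (2*n))) : τ * pflip (Sof τ) ∈ Eset n := by
  rw [mem_Eset]
  intro i
  rw [Equiv.Perm.mul_apply, Equiv.Perm.mul_apply, pflip_lo, pflip_hi]
  by_cases h : i ∈ Sof τ
  · simp only [h, if_pos]
    exact (Finset.mem_filter.mp h).2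
  · simp only [h, if_neg, if_false]
    have hle : ¬ τ (hi i) < τ (lo i) := fun hc => h (Finset.mem_filter.mpr ⟨Finset.mem_univ i, hc⟩)
    have hne : τ (lo i) ≠ τ (hi i) := fun e => lo_ne_hi i i (τ.injective e)
    exact lt_of_le_of_ne (le_of_not_gt hle) hne

lemma Sof_mul_pflip {σ : Equiv.Perm (Fin (2*n))} (hσ : σ ∈ Eset n) (S : Finset (Fin n)) :
    Sof (σ * pflip S) = S := by
  ext i
  simp only [Sof, Finset.mem_filter, Finset.mem_univ, true_and,
    Equiv.Perm.mul_apply, pflip_lo, pflip_hi]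
  have h := mem_Eset.mp hσ i
  by_cases hi' : i ∈ S <;> simp [hi', h, not_lt_of_gt h, le_of_lt]

lemma perm_decomp {m : ℕ} (f : (Fin m → Equiv.Perm (Fin (2*n))) → ℂ) :
    ∑ τ : Fin m → Equiv.Perm (Fin (2*n)), f τ
      = ∑ σ ∈ Fintype.piFinset (fun _ : Fin m => Eset n),
          ∑ S : Fin m → Finset (Fin n), f (fun s => σ s * pflip (S s)) := by
  rw [← Finset.sum_product']
  refine Finset.sum_nbij'
    (i := fun τ => (fun s => τ s * pflip (Sof (τ s)), fun s => Sof (τ s)))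
    (j := fun p => fun s => p.1 s * pflip (p.2 s)) ?_ ?_ ?_ ?_ ?_
  · intro τ _
    rw [Finset.mem_product]
    refine ⟨Fintype.mem_piFinset.mpr fun s => mul_pflip_Sof_mem (τ s), Finset.mem_univ _⟩
  · intro p _; exact Finset.mem_univ _
  · intro τ _
    funext s
    exact pflip_mul_pflip _ _
  · intro p hp
    rw [Finset.mem_product] at hp
    have h1 := Fintype.mem_piFinset.mp hp.1
    have h2 : ∀ s, Sof (p.1 s * pflip (p.2 s)) = p.2 s := fun s => Sof_mul_pflip (h1 s) _
    have e1 : (fun s => (p.1 s * pflip (p.2 s)) * pflip (Sof (p.1 s * pflip (p.2 s)))) = p.1 := by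
      funext s; rw [h2 s, pflip_mul_pflip]
    have e2 : (fun s => Sof (p.1 s * pflip (p.2 s))) = p.2 := funext h2
    exact Prod.ext e1 e2
  · intro τ _
    congr 1
    funext s
    rw [pflip_mul_pflip]

lemma Eset_card : (2*n).factorial = (Eset n).card * 2^n := by
  have h1 : (Finset.univ : Finset (Equiv.Perm (Fin (2*n)))).card = (2*n).factorial := by
    simp [Fintype.card_perm]
  have h2 : (Finset.univ : Finset (Equiv.Perm (Fin (2*n)))).card
      = ((Eset n) ×ˢ (Finset.univ : Finset (Finset (Fin n)))).card := by
    refine Finset.card_nbij'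
      (i := fun τ => (τ * pflip (Sof τ), Sof τ))
      (j := fun p => p.1 * pflip p.2) ?_ ?_ ?_ ?_
    · intro τ _
      rw [Finset.mem_coe, Finset.mem_product]
      exact ⟨mul_pflip_Sof_mem τ, Finset.mem_univ _⟩
    · intro p _; exact Finset.mem_univ _
    · intro τ _; exact pflip_mul_pflip _ _
    · intro p hp
      rw [Finset.mem_coe, Finset.mem_product] at hp
      have h3 : Sof (p.1 * pflip p.2) = p.2 := Sof_mul_pflip hp.1 _
      refine Prod.ext ?_ h3
      show (p.1 * pflip p.2) * pflip (Sof (p.1 * pflip p.2)) = p.1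
      rw [h3, pflip_mul_pflip]
  rw [← h1, h2, Finset.card_product]
  simp [Fintype.card_finset]

def pb (n : ℕ) : Fin n × Bool → Fin (2*n) := fun p => if p.2 then hi p.1 else lo p.1
def pbInv (n : ℕ) : Fin (2*n) → Fin n × Bool := fun k => (pairIdx k, decide (k.1 % 2 = 1))

lemma pb_lo (i : Fin n) : pbInv n (lo i) = (i, false) := by
  have h : ¬ ((lo i).1 % 2 = 1) := by simp only [lo]; omega
  simp [pbInv, h]
lemma pb_hi (i : Fin n) : pbInv n (hi i) = (i, true) := by
  have h : ((hi i).1 % 2 = 1) := by simp only [hi]; omega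
  simp [pbInv, h]

def pairBool (n : ℕ) : Fin n × Bool ≃ Fin (2*n) where
  toFun := pb n
  invFun := pbInv n
  left_inv := by
    rintro ⟨i, b⟩
    cases b
    · show pbInv n (lo i) = _
      rw [pb_lo]
    · show pbInv n (hi i) = _
      rw [pb_hi]
  right_inv := by
    intro k
    obtain ⟨j, hk | hk⟩ : ∃ j, k = lo j ∨ k = hi j := ⟨pairIdx k, lo_or_hi k⟩ <;> subst hk
    · rw [show pbInv n (lo j) = (j, false) from pb_lo j]
      simp [pb]
    · rw [show pbInv n (hi j) = (j, true) from pb_hi j]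
      simp [pb]

lemma prodPair {M : Type*} [CommMonoid M] (F : Fin (2*n) → M) :
    ∏ k, F k = ∏ i : Fin n, F (lo i) * F (hi i) := by
  rw [Fintype.prod_equiv (pairBool n).symm F (fun p => F (pairBool n p)) (fun p => by simp)]
  rw [Fintype.prod_prod_type]
  refine Finset.prod_congr rfl fun i _ => ?_
  rw [Fintype.prod_bool]
  show F (pb n (i, true)) * F (pb n (i, false)) = _
  simp only [pb]
  exact mul_comm _ _

def pairFun (X : Type*) : (Fin (2*n) → X) ≃ (Fin n → X × X) where
  toFun x i := (x (lo i), x (hi i))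
  invFun g k := if k.1 % 2 = 0 then (g (pairIdx k)).1 else (g (pairIdx k)).2
  left_inv := by
    intro x
    funext k
    show (if k.1 % 2 = 0 then (x (lo (pairIdx k))) else (x (hi (pairIdx k)))) = x k
    obtain ⟨j, hk | hk⟩ : ∃ j, k = lo j ∨ k = hi j := ⟨pairIdx k, lo_or_hi k⟩ <;> subst hk
    · rw [if_pos (by simp only [lo]; omega), pairIdx_lo]
    · rw [if_neg (by simp only [hi]; omega), pairIdx_hi]
  right_inv := by
    intro g
    funext i
    show (if (lo i).1 % 2 = 0 then (g (pairIdx (lo i))).1 else (g (pairIdx (lo i))).2,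
          if (hi i).1 % 2 = 0 then (g (pairIdx (hi i))).1 else (g (pairIdx (hi i))).2) = g i
    rw [if_pos (by simp only [lo]; omega), if_neg (by simp only [hi]; omega),
      pairIdx_lo, pairIdx_hi]

lemma sumPair {X : Type*} [Fintype X] (f : Fin n → X → X → ℂ) :
    ∑ x : Fin (2*n) → X, ∏ i : Fin n, f i (x (lo i)) (x (hi i))
      = ∏ i : Fin n, ∑ a : X, ∑ b : X, f i a b := by
  have h1 : ∀ i : Fin n, ∑ a : X, ∑ b : X, f i a b = ∑ p : X × X, f i p.1 p.2 := by
    intro i; rw [Fintype.sum_prod_type]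
  simp_rw [h1]
  rw [Fintype.prod_sum (f := fun i (p : X × X) => f i p.1 p.2)]
  exact Fintype.sum_equiv (pairFun X) _ _ (fun x => rfl)

def transp {m n : ℕ} (S : Fin m → Finset (Fin n)) : Fin n → Finset (Fin m) :=
  fun i => Finset.univ.filter (fun s => i ∈ S s)

lemma transp_transp {m : ℕ} (S : Fin m → Finset (Fin n)) : transp (transp S) = S := by
  funext s
  ext i
  simp [transp]

def transpEquiv (m n : ℕ) : (Fin m → Finset (Fin n)) ≃ (Fin n → Finset (Fin m)) where
  toFun := transp
  invFun := transp
  left_inv := transp_transp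
  right_inv := transp_transp

lemma sum_transp {m : ℕ} (H : Fin n → Finset (Fin m) → ℂ) :
    ∑ S : Fin m → Finset (Fin n), ∏ i : Fin n, H i (transp S i)
      = ∏ i : Fin n, ∑ U : Finset (Fin m), H i U := by
  rw [Fintype.prod_sum (f := H)]
  exact Fintype.sum_equiv (transpEquiv m n) _ _ (fun S => rfl)

lemma card_transp_sum {m : ℕ} (S : Fin m → Finset (Fin n)) :
    ∑ s : Fin m, (S s).card = ∑ i : Fin n, (transp S i).card := by
  have h1 : ∀ s, (S s).card = ∑ i : Fin n, if i ∈ S s then 1 else 0 := by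
    intro s
    rw [Finset.sum_ite_mem, Finset.univ_inter, Finset.card_eq_sum_ones]
  have h2 : ∀ i, (transp S i).card = ∑ s : Fin m, if i ∈ S s then 1 else 0 := by
    intro i
    rw [transp, Finset.card_eq_sum_ones, Finset.sum_filter]
  simp_rw [h1, h2]
  exact Finset.sum_comm

lemma prod_sign_transp {m : ℕ} (S : Fin m → Finset (Fin n)) :
    ∏ s : Fin m, ((-1 : ℂ))^(S s).card = ∏ i : Fin n, (-1 : ℂ)^(transp S i).card := by
  rw [Finset.prod_pow_eq_pow_sum, Finset.prod_pow_eq_pow_sum, card_transp_sum]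


lemma aux_ring (m : ℕ) (a b c : ℂ) (h : a * a^m = 1) : b * c = a * ((b * a^m) * c) := by
  calc b * c = (a * a^m) * (b*c) := by rw [h, one_mul]
  _ = a * ((b * a^m) * c) := by ring

lemma step2 {n m : ℕ} (hm : Odd m) (X : Type*) [Fintype X]
    (ψ : Fin m → Fin (2*n) → X → ℂ) (ε : X → X → ℂ) (σ : Equiv.Perm (Fin (2*n))) :
    ∑ x : Fin (2*n) → X, ∑ τ : Fin m → Equiv.Perm (Fin (2*n)),
        psgn (R := ℂ) σ * ((∏ s, psgn (τ s)) *
          ((∏ i : Fin n, ε (x (σ (lo i))) (x (σ (hi i)))) * ∏ s, ∏ k, ψ s (τ s k) (x k)))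
      = ∑ x : Fin (2*n) → X, ∑ τ : Fin m → Equiv.Perm (Fin (2*n)),
          (∏ s, psgn (τ s)) *
            ((∏ i : Fin n, ε (x (lo i)) (x (hi i))) * ∏ s, ∏ k, ψ s (τ s k) (x k)) := by
  refine (Fintype.sum_equiv (Equiv.arrowCongr σ (Equiv.refl X)) _ _ fun y => ?_).symm
  refine Fintype.sum_equiv (Equiv.piCongrRight fun _ => Equiv.mulRight σ⁻¹) _ _ fun υ => ?_
  simp only [Equiv.arrowCongr_apply, Equiv.piCongrRight_apply, Equiv.coe_refl,
    Function.comp_apply, id_eq, Equiv.coe_mulRight, Equiv.Perm.mul_apply,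
    Equiv.symm_apply_apply, Pi.map_apply]
  have hψ : ∀ s : Fin m, ∏ k, ψ s (υ s (σ⁻¹ k)) (y (σ.symm k)) = ∏ k, ψ s (υ s k) (y k) := by
    intro s
    rw [show (⇑σ⁻¹ : Fin (2*n) → Fin (2*n)) = ⇑σ.symm from rfl]
    exact Equiv.prod_comp σ.symm (fun k => ψ s (υ s k) (y k))
  simp_rw [hψ]
  have hsgn : ∀ s : Fin m, psgn (R := ℂ) (υ s * σ⁻¹) = psgn (υ s) * psgn σ := by
    intro s
    rw [psgn_mul]
    congr 1
    simp [psgn]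
  simp_rw [hsgn, Finset.prod_mul_distrib, Finset.prod_const, Finset.card_univ,
    Fintype.card_fin]
  exact aux_ring m (psgn σ) _ _ (psgn_mul_pow_odd hm σ)

lemma step4' {m : ℕ} {X : Type*} [Fintype X] (ε : X → X → ℂ) (A B : Fin m → X → X → ℂ) :
    ∑ U : Finset (Fin m), ((-1:ℂ))^U.card * ∑ a : X, ∑ b : X, ε a b *
        ∏ s, (if s ∈ U then B s a b else A s a b)
      = ∑ a : X, ∑ b : X, ε a b * ∏ s, (A s a b - B s a b) := by
  have hexp : ∀ a b : X, ∏ s : Fin m, (A s a b - B s a b)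
      = ∑ U : Finset (Fin m), ((-1:ℂ))^U.card * ∏ s, (if s ∈ U then B s a b else A s a b) := by
    intro a b
    calc ∏ s : Fin m, (A s a b - B s a b)
        = ∏ s : Fin m, ((- B s a b) + A s a b) := by
          exact Finset.prod_congr rfl fun s _ => by ring
      _ = ∑ U : Finset (Fin m), (∏ s ∈ U, (- B s a b)) * ∏ s ∈ Uᶜ, A s a b :=
          Fintype.prod_add _ _
      _ = ∑ U : Finset (Fin m), ((-1:ℂ))^U.card * ∏ s, (if s ∈ U then B s a b else A s a b) := by
          refine Finset.sum_congr rfl fun U _ => ?_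
          have h1 : ∏ s ∈ U, (- B s a b) = (-1:ℂ)^U.card * ∏ s ∈ U, B s a b := by
            rw [← Finset.prod_const, ← Finset.prod_mul_distrib]
            exact Finset.prod_congr rfl fun s _ => (neg_one_mul _).symm
          have h2 : ∏ s : Fin m, (if s ∈ U then B s a b else A s a b)
              = (∏ s ∈ U, B s a b) * ∏ s ∈ Uᶜ, A s a b := by
            rw [Finset.prod_ite]
            congr 1
            · exact Finset.prod_congr (by ext s; simp) fun _ _ => rfl
            · exact Finset.prod_congr (by ext s; simp) fun _ _ => rfl
          rw [h1, h2]
          ring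
  simp_rw [hexp, Finset.mul_sum]
  rw [Finset.sum_comm]
  refine Finset.sum_congr rfl fun a _ => ?_
  rw [Finset.sum_comm]
  refine Finset.sum_congr rfl fun b _ => ?_
  refine Finset.sum_congr rfl fun U _ => ?_
  ring

lemma step3 {n m : ℕ} (X : Type*) [Fintype X]
    (ψ : Fin m → Fin (2*n) → X → ℂ) (ε : X → X → ℂ)
    (σ : Fin m → Equiv.Perm (Fin (2*n))) :
    ∑ S : Fin m → Finset (Fin n), ∑ x : Fin (2*n) → X,
        (∏ s, psgn (R := ℂ) (σ s * pflip (S s))) *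
          ((∏ i : Fin n, ε (x (lo i)) (x (hi i))) *
            ∏ s, ∏ k, ψ s ((σ s * pflip (S s)) k) (x k))
      = (∏ s, psgn (R := ℂ) (σ s)) *
          ∏ i : Fin n, ∑ a : X, ∑ b : X, ε a b *
            ∏ s, (ψ s (σ s (lo i)) a * ψ s (σ s (hi i)) b
                  - ψ s (σ s (lo i)) b * ψ s (σ s (hi i)) a) := by
  -- Step (i): simplify each S-summand
  have hS : ∀ S : Fin m → Finset (Fin n),
      ∑ x : Fin (2*n) → X,
        (∏ s, psgn (R := ℂ) (σ s * pflip (S s))) *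
          ((∏ i : Fin n, ε (x (lo i)) (x (hi i))) *
            ∏ s, ∏ k, ψ s ((σ s * pflip (S s)) k) (x k))
      = (∏ s, psgn (R := ℂ) (σ s)) *
          ∏ i : Fin n, ((-1:ℂ)^(transp S i).card * ∑ a : X, ∑ b : X, ε a b *
            ∏ s, (if s ∈ transp S i then ψ s (σ s (hi i)) a * ψ s (σ s (lo i)) b
                  else ψ s (σ s (lo i)) a * ψ s (σ s (hi i)) b)) := by
    intro S
    -- sign
    have hsgn : ∏ s, psgn (R := ℂ) (σ s * pflip (S s))
        = (∏ s, psgn (R := ℂ) (σ s)) * ∏ i : Fin n, (-1:ℂ)^(transp S i).card := by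
      simp_rw [psgn_mul, psgn_pflip]
      rw [Finset.prod_mul_distrib, prod_sign_transp]
    -- ψ per s
    have hpsi : ∀ (x : Fin (2*n) → X) (s : Fin m),
        ∏ k, ψ s ((σ s * pflip (S s)) k) (x k)
          = ∏ i : Fin n, ((if s ∈ transp S i then ψ s (σ s (hi i)) (x (lo i))
                else ψ s (σ s (lo i)) (x (lo i))) *
              (if s ∈ transp S i then ψ s (σ s (lo i)) (x (hi i))
                else ψ s (σ s (hi i)) (x (hi i)))) := by
      intro x s
      rw [prodPair (fun k => ψ s ((σ s * pflip (S s)) k) (x k))]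
      refine Finset.prod_congr rfl fun i _ => ?_
      rw [Equiv.Perm.mul_apply, Equiv.Perm.mul_apply, pflip_lo, pflip_hi]
      by_cases h : i ∈ S s
      · have h2 : s ∈ transp S i := by simpa [transp] using h
        simp [h, h2]
      · have h2 : s ∉ transp S i := by simpa [transp] using h
        simp [h, h2]
    have hx : ∀ x : Fin (2*n) → X,
        (∏ i : Fin n, ε (x (lo i)) (x (hi i))) *
            ∏ s, ∏ k, ψ s ((σ s * pflip (S s)) k) (x k)
          = ∏ i : Fin n, (ε (x (lo i)) (x (hi i)) *
              ∏ s, ((if s ∈ transp S i then ψ s (σ s (hi i)) (x (lo i))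
                else ψ s (σ s (lo i)) (x (lo i))) *
              (if s ∈ transp S i then ψ s (σ s (lo i)) (x (hi i))
                else ψ s (σ s (hi i)) (x (hi i))))) := by
      intro x
      simp_rw [hpsi]
      rw [Finset.prod_mul_distrib]
      congr 1
      exact Finset.prod_comm
    simp_rw [hsgn, hx, mul_assoc, ← Finset.mul_sum]
    congr 1
    rw [sumPair (f := fun i a b => ε a b *
        ∏ s, ((if s ∈ transp S i then ψ s (σ s (hi i)) a else ψ s (σ s (lo i)) a) *
          (if s ∈ transp S i then ψ s (σ s (lo i)) b else ψ s (σ s (hi i)) b)))]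
    rw [← Finset.prod_mul_distrib]
    refine Finset.prod_congr rfl fun i _ => ?_
    congr 1
    refine Finset.sum_congr rfl fun a _ => Finset.sum_congr rfl fun b _ => ?_
    congr 1
    refine Finset.prod_congr rfl fun s _ => ?_
    by_cases h : s ∈ transp S i <;> simp [h]
  simp_rw [hS, ← Finset.mul_sum]
  congr 1
  rw [sum_transp (H := fun i U => (-1:ℂ)^U.card * ∑ a : X, ∑ b : X, ε a b *
      ∏ s, (if s ∈ U then ψ s (σ s (hi i)) a * ψ s (σ s (lo i)) b
            else ψ s (σ s (lo i)) a * ψ s (σ s (hi i)) b))]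
  refine Finset.prod_congr rfl fun i _ => ?_
  rw [step4' ε (fun s a b => ψ s (σ s (lo i)) a * ψ s (σ s (hi i)) b)
      (fun s a b => ψ s (σ s (hi i)) a * ψ s (σ s (lo i)) b)]
  refine Finset.sum_congr rfl fun a _ => Finset.sum_congr rfl fun b _ => ?_
  congr 1
  exact Finset.prod_congr rfl fun s _ => by ring

def vmap {m n : ℕ} (σ : Fin m → Equiv.Perm (Fin (2*n))) (i : Fin n) : Fin (2*m) → Fin (2*n) :=
  fun t => σ ⟨t.1/2, by have := t.2; omega⟩ (if t.1 % 2 = 0 then lo i else hi i)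

lemma fin_app {m n : ℕ} (σ : Fin m → Equiv.Perm (Fin (2*n))) {j j' : Fin m} (h : j.1 = j'.1)
    (k : Fin (2*n)) : σ j k = σ j' k := by
  have : j = j' := Fin.ext h
  rw [this]

lemma vmap_lo {m n : ℕ} (σ : Fin m → Equiv.Perm (Fin (2*n))) (i : Fin n) (s : Fin m) :
    vmap σ i (lo s) = σ s (lo i) := by
  simp only [vmap]
  rw [if_pos (show (lo (n := m) s).1 % 2 = 0 by simp only [lo]; omega)]
  exact fin_app σ (show (lo (n := m) s).1 / 2 = s.1 by simp only [lo]; omega) (lo i)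

lemma vmap_hi {m n : ℕ} (σ : Fin m → Equiv.Perm (Fin (2*n))) (i : Fin n) (s : Fin m) :
    vmap σ i (hi s) = σ s (hi i) := by
  simp only [vmap]
  rw [if_neg (show ¬ (hi (n := m) s).1 % 2 = 0 by simp only [hi]; omega)]
  exact fin_app σ (show (hi (n := m) s).1 / 2 = s.1 by simp only [hi]; omega) (hi i)

set_option maxHeartbeats 1000000 in
/-- De Bruijn type integral (summation) formula for hyperpfaffians over a
finite linearly ordered set: for odd `m`,
`(1/(2n)!) ∑_{x ∈ X^{2n}} pf(ε(x_i,x_j)) ∏_{s=1}^m det(ψ_{s,j}(x_k)) = Pf^[2m](Q)`. -/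
theorem deBruijn_hyperpfaffian (m n : ℕ) (hm : Odd m) (hm' : 0 < m) (hn : 0 < n)
    (X : Type*) [Fintype X] [LinearOrder X]
    (ψ : Fin m → Fin (2*n) → X → ℂ) (ε : X → X → ℂ)
    (hε : ∀ x y : X, ε y x = - ε x y)
    (Q : (Fin (2*m) → Fin (2*n)) → ℂ)
    (hQ : ∀ v : Fin (2*m) → Fin (2*n),
      Q v = (1/2 : ℂ) * ∑ x : X, ∑ y : X, ε x y *
        ∏ s : Fin m,
          (ψ s (v (lo s)) x * ψ s (v (hi s)) y - ψ s (v (lo s)) y * ψ s (v (hi s)) x)) :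
    (((2*n).factorial : ℂ)⁻¹) * ∑ x : Fin (2*n) → X,
        pfn n (Matrix.of fun i j : Fin (2*n) => ε (x i) (x j)) *
          ∏ s : Fin m, Matrix.det (Matrix.of fun j k : Fin (2*n) => ψ s j (x k))
      = hpf m n Q := by
  have hC : ∀ x : Fin (2*n) → X,
      pfn n (Matrix.of fun i j : Fin (2*n) => ε (x i) (x j)) *
          ∏ s : Fin m, Matrix.det (Matrix.of fun j k : Fin (2*n) => ψ s j (x k))
      = (n.factorial:ℂ)⁻¹ * ∑ σ ∈ Eset n, ∑ τ : Fin m → Equiv.Perm (Fin (2*n)),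
          psgn σ * ((∏ s, psgn (τ s)) *
            ((∏ i : Fin n, ε (x (σ (lo i))) (x (σ (hi i)))) *
              ∏ s, ∏ k, ψ s ((τ s) k) (x k))) := by
    intro x
    have hA : pfn n (Matrix.of fun i j : Fin (2*n) => ε (x i) (x j))
        = (n.factorial:ℂ)⁻¹ * ∑ σ ∈ Eset n, psgn σ *
            ∏ i : Fin n, ε (x (σ (lo i))) (x (σ (hi i))) := by
      rw [pfn, smul_eq_mul]
      rfl
    have hB : ∏ s : Fin m, Matrix.det (Matrix.of fun j k : Fin (2*n) => ψ s j (x k))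
        = ∑ τ : Fin m → Equiv.Perm (Fin (2*n)),
            ∏ s, (psgn (τ s) * ∏ k, ψ s ((τ s) k) (x k)) := by
      rw [← Fintype.prod_sum (f := fun (s : Fin m) (p : Equiv.Perm (Fin (2*n))) =>
        psgn (R := ℂ) p * ∏ k, ψ s (p k) (x k))]
      exact Finset.prod_congr rfl fun s _ => by rw [Matrix.det_apply']; rfl
    rw [hA, hB, mul_assoc, Finset.sum_mul_sum]
    congr 1
    refine Finset.sum_congr rfl fun σ _ => Finset.sum_congr rfl fun τ _ => ?_
    rw [Finset.prod_mul_distrib]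
    ring
  have h2Q : ∀ (σ : Fin m → Equiv.Perm (Fin (2*n))) (i : Fin n),
      ∑ a : X, ∑ b : X, ε a b * ∏ s, (ψ s (σ s (lo i)) a * ψ s (σ s (hi i)) b
          - ψ s (σ s (lo i)) b * ψ s (σ s (hi i)) a)
        = 2 * Q (vmap σ i) := by
    intro σ i
    rw [hQ (vmap σ i)]
    simp_rw [vmap_lo, vmap_hi]
    rw [← mul_assoc]
    norm_num
  have hMID : ∑ σ ∈ Eset n, ∑ x : Fin (2*n) → X, ∑ τ : Fin m → Equiv.Perm (Fin (2*n)),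
        (∏ s, psgn (τ s)) * ((∏ i : Fin n, ε (x (lo i)) (x (hi i))) *
          ∏ s, ∏ k, ψ s ((τ s) k) (x k))
      = ((Eset n).card : ℂ) * ((2:ℂ)^n *
          ∑ σ ∈ Fintype.piFinset (fun _ : Fin m => Eset n),
            (∏ s, psgn (σ s)) * ∏ i : Fin n, Q (vmap σ i)) := by
    have hG : ∑ x : Fin (2*n) → X, ∑ τ : Fin m → Equiv.Perm (Fin (2*n)),
          (∏ s, psgn (τ s)) * ((∏ i : Fin n, ε (x (lo i)) (x (hi i))) *
            ∏ s, ∏ k, ψ s ((τ s) k) (x k))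
        = (2:ℂ)^n * ∑ σ ∈ Fintype.piFinset (fun _ : Fin m => Eset n),
            (∏ s, psgn (σ s)) * ∏ i : Fin n, Q (vmap σ i) := by
      rw [Finset.sum_comm]
      rw [perm_decomp (f := fun τ : Fin m → Equiv.Perm (Fin (2*n)) =>
        ∑ x : Fin (2*n) → X, (∏ s, psgn (τ s)) *
          ((∏ i : Fin n, ε (x (lo i)) (x (hi i))) *
            ∏ s, ∏ k, ψ s ((τ s) k) (x k)))]
      rw [Finset.mul_sum]
      refine Finset.sum_congr rfl fun σ _ => ?_
      rw [step3 X ψ ε σ]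
      have : ∏ i : Fin n, ∑ a : X, ∑ b : X, ε a b *
            ∏ s, (ψ s (σ s (lo i)) a * ψ s (σ s (hi i)) b
              - ψ s (σ s (lo i)) b * ψ s (σ s (hi i)) a)
          = ∏ i : Fin n, ((2:ℂ) * Q (vmap σ i)) :=
        Finset.prod_congr rfl fun i _ => h2Q σ i
      rw [this, Finset.prod_mul_distrib, Finset.prod_const, Finset.card_univ,
        Fintype.card_fin]
      ring
    calc ∑ σ ∈ Eset n, ∑ x : Fin (2*n) → X, ∑ τ : Fin m → Equiv.Perm (Fin (2*n)),
        (∏ s, psgn (τ s)) * ((∏ i : Fin n, ε (x (lo i)) (x (hi i))) *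
          ∏ s, ∏ k, ψ s ((τ s) k) (x k))
        = ∑ _σ ∈ Eset n, ((2:ℂ)^n *
            ∑ σ ∈ Fintype.piFinset (fun _ : Fin m => Eset n),
              (∏ s, psgn (σ s)) * ∏ i : Fin n, Q (vmap σ i)) :=
          Finset.sum_congr rfl fun _ _ => hG
      _ = _ := by rw [Finset.sum_const, nsmul_eq_mul]
  calc (((2*n).factorial : ℂ)⁻¹) * ∑ x : Fin (2*n) → X,
        pfn n (Matrix.of fun i j : Fin (2*n) => ε (x i) (x j)) *
          ∏ s : Fin m, Matrix.det (Matrix.of fun j k : Fin (2*n) => ψ s j (x k))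
      = ((2*n).factorial:ℂ)⁻¹ * ((n.factorial:ℂ)⁻¹ *
          ∑ σ ∈ Eset n, ∑ x : Fin (2*n) → X, ∑ τ : Fin m → Equiv.Perm (Fin (2*n)),
            psgn σ * ((∏ s, psgn (τ s)) *
              ((∏ i : Fin n, ε (x (σ (lo i))) (x (σ (hi i)))) *
                ∏ s, ∏ k, ψ s ((τ s) k) (x k)))) := by
        congr 1
        rw [Finset.sum_congr rfl fun x _ => hC x]
        rw [← Finset.mul_sum]
        congr 1
        exact Finset.sum_comm
    _ = ((2*n).factorial:ℂ)⁻¹ * ((n.factorial:ℂ)⁻¹ *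
          ∑ σ ∈ Eset n, ∑ x : Fin (2*n) → X, ∑ τ : Fin m → Equiv.Perm (Fin (2*n)),
            (∏ s, psgn (τ s)) * ((∏ i : Fin n, ε (x (lo i)) (x (hi i))) *
              ∏ s, ∏ k, ψ s ((τ s) k) (x k))) := by
        congr 1
        congr 1
        exact Finset.sum_congr rfl fun σ _ => step2 hm X ψ ε σ
    _ = ((2*n).factorial:ℂ)⁻¹ * ((n.factorial:ℂ)⁻¹ *
          (((Eset n).card : ℂ) * ((2:ℂ)^n *
            ∑ σ ∈ Fintype.piFinset (fun _ : Fin m => Eset n),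
              (∏ s, psgn (σ s)) * ∏ i : Fin n, Q (vmap σ i)))) := by
        rw [hMID]
    _ = hpf m n Q := by
        rw [hpf, smul_eq_mul]
        have hconst : ((2*n).factorial:ℂ)⁻¹ * (((Eset n).card : ℂ) * (2:ℂ)^n) = 1 := by
          have h0 : ((2*n).factorial : ℂ) = ((Eset n).card : ℂ) * 2^n := by
            exact_mod_cast congrArg (Nat.cast : ℕ → ℂ) (Eset_card (n := n))
          rw [h0, ← h0]
          rw [h0]
          exact inv_mul_cancel₀ (h0 ▸ Nat.cast_ne_zero.mpr (Nat.factorial_ne_zero (2*n)))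
        have heq : ∑ σ ∈ Fintype.piFinset (fun _ : Fin m => Eset n),
              (∏ s, psgn (σ s)) * ∏ i : Fin n, Q (vmap σ i)
            = ∑ σ ∈ Fintype.piFinset (fun _ : Fin m => Eset n),
              (∏ s, psgn (σ s)) * ∏ i : Fin n, Q (fun t =>
                σ ⟨t.1/2, by have := t.2; omega⟩ (if t.1 % 2 = 0 then lo i else hi i)) := rfl
        rw [← heq]
        calc ((2*n).factorial:ℂ)⁻¹ * ((n.factorial:ℂ)⁻¹ *
              (((Eset n).card : ℂ) * ((2:ℂ)^n *
                ∑ σ ∈ Fintype.piFinset (fun _ : Fin m => Eset n),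
                  (∏ s, psgn (σ s)) * ∏ i : Fin n, Q (vmap σ i))))
            = (((2*n).factorial:ℂ)⁻¹ * (((Eset n).card : ℂ) * (2:ℂ)^n)) *
              ((n.factorial:ℂ)⁻¹ *
                ∑ σ ∈ Fintype.piFinset (fun _ : Fin m => Eset n),
                  (∏ s, psgn (σ s)) * ∏ i : Fin n, Q (vmap σ i)) := by ring
          _ = (n.factorial:ℂ)⁻¹ *
                ∑ σ ∈ Fintype.piFinset (fun _ : Fin m => Eset n),
                  (∏ s, psgn (σ s)) * ∏ i : Fin n, Q (vmap σ i) := by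
              rw [hconst, one_mul]

end
end

section
/- Let m, n be positive integers and x^{(i)} = (x^{(i)}_1,...,x^{(i)}_n) for 1 ≤ i ≤ 2m, with all |x^{(i)}_j| < 1 (complex numbers). Then ∑_{λ : ℓ(λ) ≤ n} s_λ(x^{(1)})···s_λ(x^{(2m)}) = ∏_{i=1}^{2m} V(x^{(i)})^{−1} · Det^{[2m]}(1/(1 − x^{(1)}_{i_1}···x^{(2m)}_{i_{2m}}))_{1≤i_1,...,i_{2m}≤n}, assuming all Vandermonde products are nonzero; the sum over all partitions λ of length at most n converges absolutely. -/
open Finset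

noncomputable section

/-- the Vandermonde product `V(x) = ∏_{i<j}(x_i - x_j)` -/
def vdm {n : ℕ} (x : Fin n → ℂ) : ℂ :=
  ∏ i : Fin n, ∏ j ∈ Finset.Ioi i, (x i - x j)

/-- the Schur polynomial `s_λ(x) = det(x_i^{λ_j + n - j})/V(x)` -/
def schurPoly {n : ℕ} (x : Fin n → ℂ) (lam : Fin n → ℕ) : ℂ :=
  Matrix.det (Matrix.of fun i j : Fin n => x i ^ (lam j + (n - 1 - j.1))) / vdm x


set_option maxHeartbeats 1000000 in
lemma hasSum_pi_prod : ∀ (N : ℕ) (f : Fin N → ℕ → ℂ),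
    (∀ i, Summable fun j => ‖f i j‖) →
    Summable (fun k : Fin N → ℕ => ‖∏ i, f i (k i)‖) ∧
    HasSum (fun k : Fin N → ℕ => ∏ i, f i (k i)) (∏ i, ∑' j, f i j) := by
  intro N
  induction N with
  | zero =>
    intro f _
    have h1 : HasSum (fun k : Fin 0 → ℕ => ∏ i, f i (k i)) (∏ i : Fin 0, ∑' j, f i j) := by
      have := hasSum_single (f := fun k : Fin 0 → ℕ => ∏ i, f i (k i))
        (fun i => 0) (fun b hb => absurd (Subsingleton.elim b _) hb)
      simpa using this
    refine ⟨?_, h1⟩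
    have := hasSum_single (f := fun k : Fin 0 → ℕ => ‖∏ i, f i (k i)‖)
      (fun i => 0) (fun b hb => absurd (Subsingleton.elim b _) hb)
    exact this.summable
  | succ N ih =>
    intro f hf
    obtain ⟨ihS, ihH⟩ := ih (fun i => f i.succ) (fun i => hf i.succ)
    set e := Fin.consEquiv (fun _ : Fin (N + 1) => ℕ) with he
    have key : ∀ p : ℕ × (Fin N → ℕ),
        ∏ i, f i (e p i) = f 0 p.1 * ∏ i : Fin N, f i.succ (p.2 i) := by
      intro p
      rw [Fin.prod_univ_succ]
      simp [he, Fin.consEquiv]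
    have hnorm : Summable (fun p : ℕ × (Fin N → ℕ) =>
        ‖f 0 p.1 * ∏ i : Fin N, f i.succ (p.2 i)‖) :=
      Summable.mul_norm (R := ℂ) (ι := ℕ) (ι' := (Fin N → ℕ))
        (f := f 0) (g := fun k => ∏ i : Fin N, f i.succ (k i)) (hf 0) ihS
    have hsum : Summable (fun p : ℕ × (Fin N → ℕ) =>
        f 0 p.1 * ∏ i : Fin N, f i.succ (p.2 i)) := hnorm.of_norm
    have htsum := tsum_mul_tsum_of_summable_norm (R := ℂ) (ι := ℕ) (ι' := (Fin N → ℕ))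
        (f := f 0) (g := fun k => ∏ i : Fin N, f i.succ (k i)) (hf 0) ihS
    have hH : HasSum (fun p : ℕ × (Fin N → ℕ) => f 0 p.1 * ∏ i : Fin N, f i.succ (p.2 i))
        (∏ i : Fin (N+1), ∑' j, f i j) := by
      rw [Fin.prod_univ_succ]
      have h2 := hsum.hasSum
      rw [← htsum, ihH.tsum_eq] at h2
      exact h2
    have hcomp : ((fun k : Fin (N+1) → ℕ => ∏ i, f i (k i)) ∘ e)
        = fun p => f 0 p.1 * ∏ i : Fin N, f i.succ (p.2 i) := funext key
    have hcompn : ((fun k : Fin (N+1) → ℕ => ‖∏ i, f i (k i)‖) ∘ e)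
        = fun p => ‖f 0 p.1 * ∏ i : Fin N, f i.succ (p.2 i)‖ := by
      funext p; simp only [Function.comp]; rw [key p]
    constructor
    · rw [← Equiv.summable_iff e, hcompn]; exact hnorm
    · rw [← Equiv.hasSum_iff e, hcomp]; exact hH

lemma strictMono_add_le {n : ℕ} {h : Fin n → ℕ} (hh : StrictMono h) :
    ∀ (d : ℕ) (a b : Fin n), a.1 + d = b.1 → h a + d ≤ h b := by
  intro d
  induction d with
  | zero =>
    intro a b hab
    have : a = b := Fin.ext (by omega)
    subst this; omega
  | succ d ihd =>
    intro a b hab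
    have hb' : a.1 + d < n := by have := b.2; omega
    have h1 := ihd a ⟨a.1 + d, hb'⟩ rfl
    have h2 : h ⟨a.1 + d, hb'⟩ < h b := hh (by rw [Fin.lt_def]; simp; omega)
    omega

lemma strictAnti_add_le {n : ℕ} {g : Fin n → ℕ} (hg : StrictAnti g) {j k : Fin n}
    (hjk : j ≤ k) : g k + (k.1 - j.1) ≤ g j := by
  have hmono : StrictMono (fun i : Fin n => g i.rev) := by
    intro a b hab
    exact hg (by rw [Fin.rev_lt_rev]; exact hab)
  have := strictMono_add_le hmono (k.1 - j.1) k.rev j.rev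
    (by rw [Fin.val_rev, Fin.val_rev]; have := k.2; have := j.2; have := Fin.le_def.1 hjk; omega)
  simpa [Fin.rev_rev] using this

lemma strictAnti_lower {n : ℕ} {g : Fin n → ℕ} (hg : StrictAnti g) (hn : 0 < n) (j : Fin n) :
    n - 1 - j.1 ≤ g j := by
  have hlast : j ≤ (⟨n - 1, by omega⟩ : Fin n) := by rw [Fin.le_def]; have := j.2; simp; omega
  have := strictAnti_add_le hg hlast
  simp at this; omega

/-- strictly monotone permutation of `Fin n` is the identity -/
lemma perm_strictMono_eq_id {n : ℕ} (ρ : Equiv.Perm (Fin n)) (hρ : StrictMono ρ) :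
    ∀ i, ρ i = i := by
  have hval : StrictMono (fun i : Fin n => (ρ i).1) := fun a b hab => hρ hab
  have hle : ∀ i : Fin n, i.1 ≤ (ρ i).1 := by
    intro i
    have h0 : (0 : ℕ) < n := i.pos
    have := strictMono_add_le hval i.1 ⟨0, h0⟩ i (by simp)
    omega
  have hρsymm : StrictMono ρ.symm := by
    intro a b hab
    rcases lt_trichotomy (ρ.symm a) (ρ.symm b) with h | h | h
    · exact h
    · exfalso
      have : a = b := by have := congrArg ρ h; simpa using this
      exact absurd this (ne_of_lt hab)
    · exfalso
      have h2 := hρ h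
      simp only [Equiv.apply_symm_apply] at h2
      exact absurd hab (lt_asymm h2)
  have hle' : ∀ i : Fin n, i.1 ≤ (ρ.symm i).1 := by
    intro i
    have h0 : (0 : ℕ) < n := i.pos
    have := strictMono_add_le (fun a b hab => hρsymm hab : StrictMono (fun i : Fin n => (ρ.symm i).1))
      i.1 ⟨0, h0⟩ i (by simp)
    omega
  intro i
  have h1 : i ≤ ρ i := Fin.le_def.2 (hle i)
  have h2 : ρ i ≤ i := by
    have := hle' i
    have h3 : (i : Fin n) ≤ ρ.symm i := Fin.le_def.2 this
    have := hρ.monotone h3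
    simpa using this
  exact le_antisymm h2 h1

def muF {n : ℕ} (f : Fin n → ℕ) : Fin n → ℕ := fun j => f j + (n - 1 - j.1)

lemma muF_strictAnti {n : ℕ} {f : Fin n → ℕ} (hf : ∀ j k : Fin n, j ≤ k → f k ≤ f j) :
    StrictAnti (muF f) := by
  intro j k hjk
  have h1 : f k ≤ f j := hf j k hjk.le
  have h2 := k.2
  have h3 := Fin.lt_def.1 hjk
  simp only [muF]
  omega

def phi (n : ℕ) (p : {f : Fin n → ℕ // ∀ j k : Fin n, j ≤ k → f k ≤ f j} × Equiv.Perm (Fin n)) :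
    {k : Fin n → ℕ // Function.Injective k} :=
  ⟨muF p.1.1 ∘ p.2, ((muF_strictAnti p.1.2).injective).comp p.2.injective⟩

lemma phi_bijective (n : ℕ) (hn : 0 < n) : Function.Bijective (phi n) := by
  constructor
  · rintro ⟨f, π⟩ ⟨g, π'⟩ hfg
    have hval : muF f.1 ∘ π = muF g.1 ∘ π' := congrArg Subtype.val hfg
    set ρ : Equiv.Perm (Fin n) := π.symm.trans π' with hρdef
    have hcomp : ∀ j, muF f.1 j = muF g.1 (ρ j) := by
      intro j
      have := congrFun hval (π.symm j)
      simpa [ρ] using this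
    have hρmono : StrictMono ρ := by
      intro a b hab
      have h1 : muF f.1 b < muF f.1 a := muF_strictAnti f.2 hab
      rw [hcomp a, hcomp b] at h1
      exact (muF_strictAnti g.2).lt_iff_gt.1 h1
    have hρid : ∀ i, ρ i = i := perm_strictMono_eq_id ρ hρmono
    have hmufg : muF f.1 = muF g.1 := by
      funext j; rw [hcomp j, hρid j]
    have hf_eq : f = g := by
      apply Subtype.ext; funext j
      have := congrFun hmufg j
      simp only [muF] at this; omega
    subst hf_eq
    have hπ : π = π' := by
      apply Equiv.ext; intro j
      exact (muF_strictAnti f.2).injective (congrFun hval j)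
    rw [hπ]
  · rintro ⟨k, hk⟩
    set σs := Tuple.sort k with hσs
    have hmono : Monotone (k ∘ σs) := Tuple.monotone_sort k
    have hsm : StrictMono (k ∘ σs) := hmono.strictMono_of_injective (hk.comp σs.injective)
    set g : Fin n → ℕ := fun i => k (σs i.rev) with hg
    have hganti : StrictAnti g := by
      intro a b hab
      exact hsm (Fin.rev_lt_rev.2 hab)
    have hglow : ∀ j, n - 1 - j.1 ≤ g j := strictAnti_lower hganti hn
    set f : Fin n → ℕ := fun j => g j - (n - 1 - j.1) with hf
    have hfanti : ∀ j k' : Fin n, j ≤ k' → f k' ≤ f j := by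
      intro j k' hjk
      have h1 := strictAnti_add_le hganti hjk
      have h2 := hglow k'
      have h3 := hglow j
      have h4 := Fin.le_def.1 hjk
      have h5 := k'.2
      simp only [hf]
      omega
    have hmug : muF f = g := by
      funext j
      have := hglow j
      simp only [muF, hf]
      omega
    refine ⟨⟨⟨f, hfanti⟩, σs.symm.trans (Fin.revPerm)⟩, ?_⟩
    apply Subtype.ext
    funext j
    show (muF f ∘ _) j = k j
    simp only [Function.comp, Equiv.trans_apply, hmug]
    simp only [hg, Fin.revPerm_apply, Fin.rev_rev, Equiv.apply_symm_apply]

set_option maxHeartbeats 1000000 in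
/-- Cauchy type identity for `2m` alphabets:
`∑_{λ : ℓ(λ) ≤ n} s_λ(x⁽¹⁾)⋯s_λ(x⁽²ᵐ⁾)
  = ∏ V(x⁽ⁱ⁾)⁻¹ ⋅ Det^[2m](1/(1 - x⁽¹⁾_{i₁}⋯x⁽²ᵐ⁾_{i₂ₘ}))`,
the sum over all partitions of length ≤ n (antitone tuples) converging
absolutely. -/
theorem schur_sum_hyperdeterminant_cauchy (m n : ℕ) (hm : 0 < m) (hn : 0 < n)
    (x : Fin (2*m) → Fin n → ℂ)
    (hx : ∀ i j, ‖x i j‖ < 1)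
    (hV : ∀ i, vdm (x i) ≠ 0) :
    Summable (fun lam : {f : Fin n → ℕ // ∀ j k : Fin n, j ≤ k → f k ≤ f j} =>
      ∏ i : Fin (2*m), schurPoly (x i) lam.1) ∧
    ∑' lam : {f : Fin n → ℕ // ∀ j k : Fin n, j ≤ k → f k ≤ f j},
        ∏ i : Fin (2*m), schurPoly (x i) lam.1
      = (∏ i : Fin (2*m), (vdm (x i))⁻¹) *
          hdet m n (fun v => (1 - ∏ t : Fin (2*m), x t (v t))⁻¹) := by
  classical
  have h2m : 0 < 2 * m := by omega
  -- norms
  have hxn : ∀ t j, ‖x t j‖ < 1 := by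
    intro t j; exact hx t j
  have hy_norm : ∀ v : Fin (2*m) → Fin n, ‖∏ t, x t (v t)‖ < 1 := by
    intro v
    rw [norm_prod]
    have t0 : Fin (2*m) := ⟨0, h2m⟩
    calc ∏ t, ‖x t (v t)‖
        = ‖x t0 (v t0)‖ * ∏ t ∈ univ.erase t0, ‖x t (v t)‖ :=
          (Finset.mul_prod_erase univ _ (mem_univ t0)).symm
      _ ≤ ‖x t0 (v t0)‖ * 1 := by
          refine mul_le_mul_of_nonneg_left ?_ (norm_nonneg _)
          exact Finset.prod_le_one (fun i _ => norm_nonneg _) (fun i _ => (hxn i (v i)).le)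
      _ < 1 := by rw [mul_one]; exact hxn t0 (v t0)
  -- the matrices
  set D : Fin (2*m) → (Fin n → ℕ) → ℂ :=
    fun t k => (Matrix.of fun i j : Fin n => x t i ^ k j).det with hD
  set G : (Fin n → ℕ) → ℂ := fun k => ∏ t, D t k with hG
  -- bound for summability
  set ρ : Fin (2*m) → ℝ := fun t => univ.sup' (univ_nonempty_iff.2 ⟨⟨0, hn⟩⟩)
    (fun j => ‖x t j‖) with hρ
  have hρxb : ∀ t j, ‖x t j‖ ≤ ρ t := by
    intro t j
    simp only [hρ]
    exact Finset.le_sup' (fun j => ‖x t j‖) (mem_univ j)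
  have hρ0 : ∀ t, 0 ≤ ρ t := fun t => le_trans (norm_nonneg (x t ⟨0, hn⟩)) (hρxb t ⟨0, hn⟩)
  have hρ1 : ∀ t, ρ t < 1 := by
    intro t
    rw [hρ, Finset.sup'_lt_iff]
    exact fun j _ => hxn t j
  set s : ℝ := ∏ t, ρ t with hs
  have hs0 : 0 ≤ s := Finset.prod_nonneg fun t _ => hρ0 t
  have hs1 : s < 1 := by
    have t0 : Fin (2*m) := ⟨0, h2m⟩
    calc s = ρ t0 * ∏ t ∈ univ.erase t0, ρ t := (Finset.mul_prod_erase univ _ (mem_univ t0)).symm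
      _ ≤ ρ t0 * 1 := mul_le_mul_of_nonneg_left
          (Finset.prod_le_one (fun i _ => hρ0 i) (fun i _ => (hρ1 i).le)) (hρ0 t0)
      _ < 1 := by rw [mul_one]; exact hρ1 t0
  have hDbound : ∀ t k, ‖D t k‖ ≤ (n.factorial : ℝ) * ∏ j, ρ t ^ (k j) := by
    intro t k
    rw [hD]
    simp only [Matrix.det_apply']
    calc ‖∑ σ : Equiv.Perm (Fin n), ((Equiv.Perm.sign σ : ℤ) : ℂ) *
            ∏ i, (Matrix.of fun i j : Fin n => x t i ^ k j) (σ i) i‖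
        ≤ ∑ σ : Equiv.Perm (Fin n), ‖((Equiv.Perm.sign σ : ℤ) : ℂ) *
            ∏ i, (Matrix.of fun i j : Fin n => x t i ^ k j) (σ i) i‖ := norm_sum_le _ _
      _ ≤ ∑ σ : Equiv.Perm (Fin n), ∏ j, ρ t ^ (k j) := by
          refine Finset.sum_le_sum fun σ _ => ?_
          rw [norm_mul]
          have hsgn : ‖((Equiv.Perm.sign σ : ℤ) : ℂ)‖ = 1 := by
            rcases Int.units_eq_one_or (Equiv.Perm.sign σ) with h | h <;> simp [h]
          rw [hsgn, one_mul, norm_prod]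
          refine Finset.prod_le_prod (fun j _ => norm_nonneg _) fun j _ => ?_
          simp only [Matrix.of_apply, norm_pow]
          exact pow_le_pow_left₀ (norm_nonneg _) (hρxb t (σ j)) _
      _ = (n.factorial : ℝ) * ∏ j, ρ t ^ (k j) := by
          rw [Finset.sum_const, card_univ, Fintype.card_perm, Fintype.card_fin, nsmul_eq_mul]
  have hGbound : ∀ k, ‖G k‖ ≤ (n.factorial : ℝ) ^ (2*m) * ∏ j, s ^ (k j) := by
    intro k
    rw [hG, norm_prod]
    calc ∏ t, ‖D t k‖
        ≤ ∏ t, ((n.factorial : ℝ) * ∏ j, ρ t ^ (k j)) :=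
          Finset.prod_le_prod (fun t _ => norm_nonneg _) (fun t _ => hDbound t k)
      _ = (n.factorial : ℝ) ^ (2*m) * ∏ t, ∏ j, ρ t ^ (k j) := by
          rw [Finset.prod_mul_distrib, Finset.prod_const, card_univ, Fintype.card_fin]
      _ = (n.factorial : ℝ) ^ (2*m) * ∏ j, s ^ (k j) := by
          congr 1
          rw [Finset.prod_comm]
          refine Finset.prod_congr rfl fun j _ => ?_
          rw [hs, ← Finset.prod_pow]
  -- summability of the dominating series
  have hsb : Summable (fun k : Fin n → ℕ => ∏ j, s ^ (k j)) := by
    have h := (hasSum_pi_prod n (fun _ j => ((s : ℂ)) ^ j) (fun i => by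
      simpa [norm_pow, Complex.norm_real, abs_of_nonneg hs0] using
        summable_geometric_of_lt_one hs0 hs1)).1
    refine h.congr fun k => ?_
    rw [norm_prod]
    refine Finset.prod_congr rfl fun j _ => ?_
    rw [norm_pow, Complex.norm_real, Real.norm_eq_abs, abs_of_nonneg hs0]
  have hGsum : Summable G :=
    Summable.of_norm_bounded (hsb.mul_left _) hGbound
  -- geometric expansion of hdet
  have hgeomS : ∀ (σ : Fin (2*m) → Equiv.Perm (Fin n)) (i : Fin n),
      Summable (fun j : ℕ => ‖(∏ t, x t (σ t i)) ^ j‖) := by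
    intro σ i
    simpa [norm_pow] using
      summable_geometric_of_lt_one (norm_nonneg (∏ t, x t (σ t i)))
        (hy_norm (fun t => σ t i))
  have hpiSum : ∀ σ : Fin (2*m) → Equiv.Perm (Fin n),
      HasSum (fun k : Fin n → ℕ => ∏ i, (∏ t, x t (σ t i)) ^ (k i))
        (∏ i, ∑' j : ℕ, (∏ t, x t (σ t i)) ^ j) :=
    fun σ => (hasSum_pi_prod n (fun i j => (∏ t, x t (σ t i)) ^ j) (hgeomS σ)).2
  have hterm : ∀ σ : Fin (2*m) → Equiv.Perm (Fin n),
      (∏ t, psgn (σ t) : ℂ) * ∏ i, (1 - ∏ t, x t (σ t i))⁻¹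
        = ∑' k : Fin n → ℕ, (∏ t, psgn (σ t)) * ∏ i, (∏ t, x t (σ t i)) ^ (k i) := by
    intro σ
    rw [tsum_mul_left, (hpiSum σ).tsum_eq]
    congr 1
    refine Finset.prod_congr rfl fun i _ => ?_
    rw [tsum_geometric_of_norm_lt_one (hy_norm (fun t => σ t i))]
  have hkey : ∀ k : Fin n → ℕ,
      (∑ σ : Fin (2*m) → Equiv.Perm (Fin n),
        (∏ t, psgn (σ t)) * ∏ i, (∏ t, x t (σ t i)) ^ (k i)) = G k := by
    intro k
    have step1 : ∀ σ : Fin (2*m) → Equiv.Perm (Fin n),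
        (∏ t, psgn (σ t) : ℂ) * ∏ i, (∏ t, x t (σ t i)) ^ (k i)
          = ∏ t, (psgn (σ t) * ∏ i, x t (σ t i) ^ (k i)) := by
      intro σ
      rw [Finset.prod_mul_distrib]
      congr 1
      rw [Finset.prod_comm]
      refine Finset.prod_congr rfl fun i _ => ?_
      rw [← Finset.prod_pow]
    rw [Finset.sum_congr rfl (fun σ _ => step1 σ)]
    rw [← Fintype.piFinset_univ,
      ← Finset.prod_univ_sum (fun _ : Fin (2*m) => (univ : Finset (Equiv.Perm (Fin n))))
        (fun t τ => psgn τ * ∏ i, x t (τ i) ^ k i)]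
    rw [hG]
    refine Finset.prod_congr rfl fun t _ => ?_
    show _ = (Matrix.of fun i j : Fin n => x t i ^ k j).det
    rw [Matrix.det_apply']
    rfl
  have hdet_eq : hdet m n (fun v => (1 - ∏ t : Fin (2*m), x t (v t))⁻¹)
      = ((n.factorial : ℂ)⁻¹) • ∑' k : Fin n → ℕ, G k := by
    rw [hdet]
    congr 1
    calc ∑ σ : Fin (2*m) → Equiv.Perm (Fin n),
          (∏ t, psgn (σ t)) * ∏ i, (1 - ∏ t, x t (σ t i))⁻¹
        = ∑ σ : Fin (2*m) → Equiv.Perm (Fin n),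
            ∑' k : Fin n → ℕ, (∏ t, psgn (σ t)) * ∏ i, (∏ t, x t (σ t i)) ^ (k i) :=
          Finset.sum_congr rfl fun σ _ => hterm σ
      _ = ∑' k : Fin n → ℕ, ∑ σ : Fin (2*m) → Equiv.Perm (Fin n),
            (∏ t, psgn (σ t)) * ∏ i, (∏ t, x t (σ t i)) ^ (k i) :=
          (Summable.tsum_finsetSum (fun σ _ => ((hpiSum σ).summable).mul_left _)).symm
      _ = ∑' k : Fin n → ℕ, G k := tsum_congr hkey
  -- permutation invariance of G
  have hsgn2 : ∀ π : Equiv.Perm (Fin n), (((Equiv.Perm.sign π : ℤ) : ℂ)) ^ (2*m) = 1 := by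
    intro π
    rw [pow_mul]
    rcases Int.units_eq_one_or (Equiv.Perm.sign π) with h | h <;> simp [h]
  have hGperm : ∀ (c : Fin n → ℕ) (π : Equiv.Perm (Fin n)), G (c ∘ π) = G c := by
    intro c π
    have hDp : ∀ t, D t (c ∘ π) = ((Equiv.Perm.sign π : ℤ) : ℂ) * D t c := by
      intro t
      show ((Matrix.of fun i j : Fin n => x t i ^ c j).submatrix id π).det = _
      rw [Matrix.det_permute']
    show ∏ t, D t (c ∘ π) = ∏ t, D t c
    calc ∏ t, D t (c ∘ π) = ∏ t, (((Equiv.Perm.sign π : ℤ) : ℂ) * D t c) :=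
        Finset.prod_congr rfl fun t _ => hDp t
      _ = (((Equiv.Perm.sign π : ℤ) : ℂ)) ^ (2*m) * ∏ t, D t c := by
        rw [Finset.prod_mul_distrib, Finset.prod_const, card_univ, Fintype.card_fin]
      _ = ∏ t, D t c := by rw [hsgn2, one_mul]
  -- support of G is contained in injective tuples
  have hsupp : Function.support G ⊆ {k : Fin n → ℕ | Function.Injective k} := by
    intro k hkG
    by_contra hkinj
    simp only [Set.mem_setOf_eq, Function.Injective] at hkinj
    push_neg at hkinj
    obtain ⟨a, b, hab, hne⟩ := hkinj
    have hDz : D ⟨0, h2m⟩ k = 0 := by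
      show (Matrix.of fun i j : Fin n => x (⟨0, h2m⟩ : Fin (2*m)) i ^ k j).det = 0
      exact Matrix.det_zero_of_column_eq hne
        (fun i => by rw [Matrix.of_apply, Matrix.of_apply, hab])
    exact hkG (Finset.prod_eq_zero (mem_univ _) hDz)
  -- reindexing via the bijection phi
  have hphi_val : ∀ p : {f : Fin n → ℕ // ∀ j k : Fin n, j ≤ k → f k ≤ f j} ×
      Equiv.Perm (Fin n), G ((phi n p).1) = G (muF p.1.1) :=
    fun p => hGperm (muF p.1.1) p.2
  set E := Equiv.ofBijective (phi n) (phi_bijective n hn) with hE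
  have h1 : ∑' kk : {k : Fin n → ℕ // Function.Injective k}, G kk.1 = ∑' k, G k :=
    tsum_subtype_eq_of_support_subset hsupp
  have h2 : ∑' p : {f : Fin n → ℕ // ∀ j k : Fin n, j ≤ k → f k ≤ f j} ×
        Equiv.Perm (Fin n), G ((phi n p).1)
      = ∑' kk : {k : Fin n → ℕ // Function.Injective k}, G kk.1 :=
    E.tsum_eq (fun kk => G kk.1)
  have hsummable_inj : Summable (fun kk : {k : Fin n → ℕ // Function.Injective k} => G kk.1) :=
    hGsum.subtype _
  have hsum_prod : Summable (fun p : {f : Fin n → ℕ // ∀ j k : Fin n, j ≤ k → f k ≤ f j} ×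
      Equiv.Perm (Fin n) => G (muF p.1.1)) := by
    have h := (E.summable_iff (f := fun kk : {k : Fin n → ℕ // Function.Injective k} => G kk.1)).2
      hsummable_inj
    exact h.congr fun p => hphi_val p
  have hglam : Summable (fun lam : {f : Fin n → ℕ // ∀ j k : Fin n, j ≤ k → f k ≤ f j} =>
      G (muF lam.1)) := by
    exact hsum_prod.prod_symm.prod_factor 1
  have h3 : ∑' p : {f : Fin n → ℕ // ∀ j k : Fin n, j ≤ k → f k ≤ f j} ×
        Equiv.Perm (Fin n), G (muF p.1.1)
      = (n.factorial : ℂ) * ∑' lam : {f : Fin n → ℕ // ∀ j k : Fin n, j ≤ k → f k ≤ f j},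
          G (muF lam.1) := by
    rw [Summable.tsum_prod' hsum_prod (fun lam => Summable.of_finite)]
    have hinner : ∀ lam : {f : Fin n → ℕ // ∀ j k : Fin n, j ≤ k → f k ≤ f j},
        (∑' _π : Equiv.Perm (Fin n), G (muF lam.1)) = (n.factorial : ℂ) * G (muF lam.1) := by
      intro lam
      rw [tsum_fintype, Finset.sum_const, card_univ, Fintype.card_perm, Fintype.card_fin,
        nsmul_eq_mul]
    calc ∑' (lam : {f : Fin n → ℕ // ∀ j k : Fin n, j ≤ k → f k ≤ f j})
          (_π : Equiv.Perm (Fin n)), G (muF lam.1)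
        = ∑' lam : {f : Fin n → ℕ // ∀ j k : Fin n, j ≤ k → f k ≤ f j},
            (n.factorial : ℂ) * G (muF lam.1) := tsum_congr hinner
      _ = (n.factorial : ℂ) * ∑' lam : {f : Fin n → ℕ // ∀ j k : Fin n, j ≤ k → f k ≤ f j},
            G (muF lam.1) := tsum_mul_left
  have hnfac : (n.factorial : ℂ) ≠ 0 := Nat.cast_ne_zero.2 (Nat.factorial_ne_zero n)
  have htotal : ∑' k : Fin n → ℕ, G k
      = (n.factorial : ℂ) * ∑' lam : {f : Fin n → ℕ // ∀ j k : Fin n, j ≤ k → f k ≤ f j},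
          G (muF lam.1) := by
    rw [← h1, ← h2, tsum_congr hphi_val, h3]
  have hdet_final : hdet m n (fun v => (1 - ∏ t : Fin (2*m), x t (v t))⁻¹)
      = ∑' lam : {f : Fin n → ℕ // ∀ j k : Fin n, j ≤ k → f k ≤ f j}, G (muF lam.1) := by
    rw [hdet_eq, htotal, smul_eq_mul, ← mul_assoc, inv_mul_cancel₀ hnfac, one_mul]
  have hschur : ∀ lam : {f : Fin n → ℕ // ∀ j k : Fin n, j ≤ k → f k ≤ f j},
      ∏ t : Fin (2*m), schurPoly (x t) lam.1
        = (∏ t : Fin (2*m), (vdm (x t))⁻¹) * G (muF lam.1) := by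
    intro lam
    simp only [schurPoly, div_eq_mul_inv]
    rw [Finset.prod_mul_distrib, mul_comm]
    rfl
  constructor
  · exact Summable.congr (hglam.mul_left (∏ t : Fin (2*m), (vdm (x t))⁻¹))
      fun lam => (hschur lam).symm
  · calc ∑' lam : {f : Fin n → ℕ // ∀ j k : Fin n, j ≤ k → f k ≤ f j},
          ∏ t : Fin (2*m), schurPoly (x t) lam.1
        = ∑' lam : {f : Fin n → ℕ // ∀ j k : Fin n, j ≤ k → f k ≤ f j},
            (∏ t : Fin (2*m), (vdm (x t))⁻¹) * G (muF lam.1) := tsum_congr hschur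
      _ = (∏ t : Fin (2*m), (vdm (x t))⁻¹) *
            ∑' lam : {f : Fin n → ℕ // ∀ j k : Fin n, j ≤ k → f k ≤ f j}, G (muF lam.1) :=
          tsum_mul_left
      _ = _ := by rw [hdet_final]

end
end

section
/- Let m, n be positive integers and x^{(i)} = (x^{(i)}_1, x^{(i)}_2, ...) countably many variables for 1 ≤ i ≤ 2m. Then in the ring of symmetric functions, ∑_{λ : ℓ(λ) ≤ n} s_λ(x^{(1)})···s_λ(x^{(2m)}) = Det^{[2m]}( ∑_{k ≥ 0} h_{k−i_1}(x^{(1)})·h_{k−i_2}(x^{(2)})···h_{k−i_{2m}}(x^{(2m)}) )_{1≤i_1,...,i_{2m}≤n}, where h_r denotes the complete homogeneous symmetric function (with h_r = 0 for r < 0). -/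
open Finset

noncomputable section

/-- the complete homogeneous symmetric function `h_r(x^{(i)})` of degree `r ∈ ℤ`
(zero for `r < 0`) in the countably many variables of the `i`-th alphabet,
inside the power series ring on `2m` disjoint countable alphabets. -/
def hcomplete (m : ℕ) (i : Fin (2*m)) (r : ℤ) :
    MvPowerSeries (Fin (2*m) × ℕ) ℂ :=
  fun d => if 0 ≤ r ∧ ((d.sum fun _ k => k : ℕ) : ℤ) = r ∧ ∀ p ∈ d.support, p.1 = i
    then 1 else 0

/-- the Schur function `s_λ(x^{(i)})`, via the Jacobi–Trudi determinant
`det(h_{λ_a - a + b})`. -/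
def schurJT (m n : ℕ) (i : Fin (2*m)) (lam : Fin n → ℕ) :
    MvPowerSeries (Fin (2*m) × ℕ) ℂ :=
  Matrix.det (Matrix.of fun a b : Fin n =>
    hcomplete m i ((lam a : ℤ) - (a.1 : ℤ) + (b.1 : ℤ)))

/-- the entry `∑_{k ≥ 0} h_{k-i₁}(x⁽¹⁾)⋯h_{k-i₂ₘ}(x⁽²ᵐ⁾)`, defined
coefficientwise (in each degree only finitely many `k` contribute). -/
def gesselEntry (m n : ℕ) (v : Fin (2*m) → Fin n) :
    MvPowerSeries (Fin (2*m) × ℕ) ℂ :=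
  fun d => ∑ k ∈ Finset.range ((d.sum fun _ e => e) + n + 1),
    MvPowerSeries.coeff (R := ℂ) d
      (∏ t : Fin (2*m), hcomplete m t ((k : ℤ) - ((v t : ℕ) + 1)))

/-! ### Auxiliary machinery -/

/-- total degree (weight) of an exponent -/
def wtf {ι : Type*} (e : ι →₀ ℕ) : ℕ := e.sum fun _ k => k

lemma wtf_finsetSum {ι κ : Type*} (s : Finset κ) (l : κ → (ι →₀ ℕ)) :
    wtf (∑ i ∈ s, l i) = ∑ i ∈ s, wtf (l i) := by
  classical
  induction s using Finset.cons_induction with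
  | empty => simp [wtf]
  | cons a s ha ih =>
    rw [Finset.sum_cons, Finset.sum_cons, ← ih]
    exact Finsupp.sum_add_index' (fun _ => rfl) (fun _ _ _ => rfl)

lemma coeff_hcomplete (m : ℕ) (i : Fin (2*m)) (r : ℤ) (e : (Fin (2*m) × ℕ) →₀ ℕ) :
    MvPowerSeries.coeff (R := ℂ) e (hcomplete m i r)
      = if 0 ≤ r ∧ (wtf e : ℤ) = r ∧ ∀ p ∈ e.support, p.1 = i then 1 else 0 := rfl

/-- homogeneity: a product of `hcomplete`'s has nonzero coefficient only in the
matching total degree, and only when all degrees are nonnegative. -/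
lemma hc_ne_zero {m : ℕ} {γ : Type*} [Fintype γ] [DecidableEq γ]
    (idx : γ → Fin (2*m)) (r : γ → ℤ) (e : (Fin (2*m) × ℕ) →₀ ℕ)
    (h : MvPowerSeries.coeff (R := ℂ) e (∏ c : γ, hcomplete m (idx c) (r c)) ≠ 0) :
    (∀ c, 0 ≤ r c) ∧ (wtf e : ℤ) = ∑ c : γ, r c := by
  classical
  rw [MvPowerSeries.coeff_prod] at h
  obtain ⟨l, hl, hterm⟩ := Finset.exists_ne_zero_of_sum_ne_zero h
  have hfac : ∀ c : γ, MvPowerSeries.coeff (R := ℂ) (l c) (hcomplete m (idx c) (r c)) ≠ 0 :=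
    fun c => Finset.prod_ne_zero_iff.mp hterm c (mem_univ c)
  have hcond : ∀ c : γ, 0 ≤ r c ∧ (wtf (l c) : ℤ) = r c := by
    intro c
    have h' := hfac c
    rw [coeff_hcomplete] at h'
    split_ifs at h' with hc
    · exact ⟨hc.1, hc.2.1⟩
    · simp at h'
  have hsum : (Finset.univ.sum fun c => l c) = e := (mem_finsuppAntidiag.mp hl).1
  refine ⟨fun c => (hcond c).1, ?_⟩
  rw [← hsum, wtf_finsetSum]
  push_cast
  exact Finset.sum_congr rfl fun c _ => (hcond c).2

lemma units_smul_eq {R : Type*} [CommRing R] [Algebra ℂ R] (u : ℤˣ) (x : R) :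
    u • x = algebraMap ℂ R ((u : ℤ) : ℂ) * x := by
  rw [Units.smul_def, zsmul_eq_mul]
  congr 1
  rw [map_intCast]

lemma units_int_cast_pow_even {R : Type*} [CommRing R] (u : ℤˣ) (m : ℕ) :
    (((u : ℤ) : R)) ^ (2*m) = 1 := by
  rw [pow_mul]
  have : ((u : ℤ) : R) ^ 2 = (((u^2 : ℤˣ) : ℤ) : R) := by push_cast; ring
  rw [this, Int.units_sq]
  simp

lemma det_expand {n : ℕ} {R : Type*} [CommRing R] [Algebra ℂ R]
    (B : Fin n → Fin n → R) :
    (Matrix.of B).det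
      = ∑ τ : Equiv.Perm (Fin n), algebraMap ℂ R (psgn τ) * ∏ a, B a (τ a) := by
  have : Matrix.of B = (Matrix.of fun i j => B j i).transpose := rfl
  rw [this, Matrix.det_transpose, Matrix.det_apply]
  refine Finset.sum_congr rfl fun τ _ => ?_
  rw [units_smul_eq]
  rfl

lemma prod_det {m n : ℕ} {R : Type*} [CommRing R] [Algebra ℂ R]
    (B : Fin (2*m) → Fin n → Fin n → R) :
    ∏ t, (Matrix.of (B t)).det
      = ∑ σ : Fin (2*m) → Equiv.Perm (Fin n),
          algebraMap ℂ R (∏ t, psgn (σ t)) * ∏ t, ∏ a, B t a (σ t a) := by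
  classical
  simp only [det_expand]
  rw [Finset.prod_univ_sum]
  rw [Fintype.piFinset_univ]
  refine Finset.sum_congr rfl fun σ _ => ?_
  rw [Finset.prod_mul_distrib, ← map_prod]

section main

variable (m n : ℕ) (d : (Fin (2*m) × ℕ) →₀ ℕ)

lemma gessel_coeff_ext (hm : 0 < m) (hn : 0 < n) (v : Fin (2*m) → Fin n)
    (e : (Fin (2*m) × ℕ) →₀ ℕ) (he : wtf e ≤ wtf d) :
    MvPowerSeries.coeff (R := ℂ) e (gesselEntry m n v)
      = ∑ k ∈ range (wtf d + n + 1),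
          MvPowerSeries.coeff (R := ℂ) e (∏ t, hcomplete m t ((k : ℤ) - ((v t : ℕ) + 1))) := by
  have hdef : MvPowerSeries.coeff (R := ℂ) e (gesselEntry m n v)
      = ∑ k ∈ range (wtf e + n + 1),
          MvPowerSeries.coeff (R := ℂ) e (∏ t, hcomplete m t ((k : ℤ) - ((v t : ℕ) + 1))) := rfl
  rw [hdef]
  apply Finset.sum_subset
  · intro k hk
    simp only [mem_range] at hk ⊢
    omega
  · intro k hk1 hk2
    simp only [mem_range, not_lt] at hk2
    by_contra hne
    obtain ⟨hpos, hsum⟩ := hc_ne_zero (fun t : Fin (2*m) => t)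
      (fun t => (k : ℤ) - ((v t : ℕ) + 1)) e hne
    set t0 : Fin (2*m) := ⟨0, by omega⟩
    have hle : (k : ℤ) - ((v t0 : ℕ) + 1) ≤ ∑ t, ((k : ℤ) - ((v t : ℕ) + 1)) :=
      Finset.single_le_sum (fun t _ => hpos t) (mem_univ t0)
    have hvb : (v t0 : ℕ) < n := (v t0).2
    omega

lemma stepB (hm : 0 < m) (hn : 0 < n) (σ : Fin (2*m) → Equiv.Perm (Fin n)) :
    MvPowerSeries.coeff (R := ℂ) d (∏ i : Fin n, gesselEntry m n (fun t => σ t i))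
      = ∑ k ∈ Fintype.piFinset (fun _ : Fin n => range (wtf d + n + 1)),
          MvPowerSeries.coeff (R := ℂ) d
            (∏ i : Fin n, ∏ t, hcomplete m t ((k i : ℤ) - ((σ t i : ℕ) + 1))) := by
  classical
  rw [MvPowerSeries.coeff_prod]
  have step1 : ∀ l ∈ Finset.univ.finsuppAntidiag d,
      (∏ i : Fin n, MvPowerSeries.coeff (R := ℂ) (l i) (gesselEntry m n (fun t => σ t i)))
        = ∑ k ∈ Fintype.piFinset (fun _ : Fin n => range (wtf d + n + 1)),
            ∏ i : Fin n, MvPowerSeries.coeff (R := ℂ) (l i)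
              (∏ t, hcomplete m t ((k i : ℤ) - ((σ t i : ℕ) + 1))) := by
    intro l hl
    obtain ⟨hsum, -⟩ := mem_finsuppAntidiag.mp hl
    have hle : ∀ i : Fin n, wtf (l i) ≤ wtf d := by
      intro i
      have h2 : (∑ j : Fin n, wtf (l j)) = wtf d := by rw [← wtf_finsetSum, hsum]
      rw [← h2]
      exact Finset.single_le_sum (f := fun j => wtf (l j)) (fun j _ => Nat.zero_le _) (mem_univ i)
    calc (∏ i : Fin n, MvPowerSeries.coeff (R := ℂ) (l i) (gesselEntry m n (fun t => σ t i)))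
        = ∏ i : Fin n, ∑ k ∈ range (wtf d + n + 1),
            MvPowerSeries.coeff (R := ℂ) (l i)
              (∏ t, hcomplete m t ((k : ℤ) - ((σ t i : ℕ) + 1))) :=
          Finset.prod_congr rfl fun i _ =>
            gessel_coeff_ext m n d hm hn (fun t => σ t i) (l i) (hle i)
      _ = _ := Finset.prod_univ_sum _ _
  rw [Finset.sum_congr rfl step1, Finset.sum_comm]
  exact Finset.sum_congr rfl fun k _ => (MvPowerSeries.coeff_prod _ _ _).symm

/-- strict antitonicity gives `k b + b ≤ k a + a` -/
lemma strictAnti_plus {n : ℕ} (k : Fin n → ℕ)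
    (hk : ∀ a b : Fin n, a < b → k b < k a) :
    ∀ a b : Fin n, a ≤ b → k b + b.1 ≤ k a + a.1 := by
  have key : ∀ t : ℕ, ∀ a b : Fin n, a.1 + t = b.1 → k b + b.1 ≤ k a + a.1 := by
    intro t
    induction t with
    | zero =>
      intro a b h
      have : a = b := Fin.ext (by omega)
      subst this; exact le_rfl
    | succ t ih =>
      intro a b h
      have hb1 : a.1 + t < n := by have := b.2; omega
      have h1 := ih a ⟨a.1 + t, hb1⟩ rfl
      have h2 : k b < k ⟨a.1 + t, hb1⟩ := hk _ _ (by simp [Fin.lt_def]; omega)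
      simp at h1
      omega
  intro a b hab
  exact key (b.1 - a.1) a b (by have := Fin.le_def.mp hab; omega)

lemma strictAnti_lower_s8 {n : ℕ} (hn : 0 < n) (k : Fin n → ℕ)
    (hk : ∀ a b : Fin n, a < b → k b < k a) (a : Fin n) :
    n - 1 - a.1 ≤ k a := by
  have hlast : a ≤ (⟨n - 1, by omega⟩ : Fin n) := by
    rw [Fin.le_def]; have := a.2; simp; omega
  have := strictAnti_plus k hk a ⟨n - 1, by omega⟩ hlast
  simp at this
  omega

/-- strictly antitone maps with equal images agree -/
lemma strictAnti_eq_of_image_eq {n : ℕ} (k₁ k₂ : Fin n → ℕ)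
    (h1 : ∀ a b : Fin n, a < b → k₁ b < k₁ a)
    (h2 : ∀ a b : Fin n, a < b → k₂ b < k₂ a)
    (him : Finset.image k₁ univ = Finset.image k₂ univ) : k₁ = k₂ := by
  have inj : ∀ (k : Fin n → ℕ), (∀ a b : Fin n, a < b → k b < k a) → Function.Injective k := by
    intro k hk a b hab
    rcases lt_trichotomy a b with h | h | h
    · exact absurd hab (hk a b h).ne'
    · exact h
    · exact absurd hab (hk b a h).ne
  have hcard : (Finset.image k₁ univ).card = n := by
    rw [Finset.card_image_of_injective _ (inj k₁ h1), card_univ, Fintype.card_fin]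
  have mono : ∀ (k : Fin n → ℕ), (∀ a b : Fin n, a < b → k b < k a) →
      StrictMono (fun a : Fin n => k (Fin.rev a)) := by
    intro k hk a b hab
    exact hk _ _ (Fin.rev_lt_rev.mpr hab)
  have e1 : (fun a : Fin n => k₁ (Fin.rev a)) = (Finset.image k₁ univ).orderEmbOfFin hcard :=
    Finset.orderEmbOfFin_unique hcard (fun x => Finset.mem_image_of_mem _ (mem_univ _)) (mono k₁ h1)
  have e2 : (fun a : Fin n => k₂ (Fin.rev a)) = (Finset.image k₁ univ).orderEmbOfFin hcard :=
    Finset.orderEmbOfFin_unique hcard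
      (fun x => him ▸ Finset.mem_image_of_mem _ (mem_univ _)) (mono k₂ h2)
  funext a
  have := congrFun (e1.trans e2.symm) (Fin.rev a)
  simpa [Fin.rev_rev] using this

lemma orbit_sum (hn : 0 < n) (Nb : ℕ) (T : (Fin n → ℕ) → ℂ)
    (h0 : ∀ k, ¬ Function.Injective k → T k = 0)
    (hperm : ∀ (k : Fin n → ℕ) (π : Equiv.Perm (Fin n)), T (k ∘ π) = T k) :
    ∑ k ∈ Fintype.piFinset (fun _ : Fin n => range Nb), T k
      = (n.factorial : ℂ) *
        ∑ k ∈ (Fintype.piFinset (fun _ : Fin n => range Nb)).filter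
            (fun k => ∀ a b : Fin n, a < b → k b < k a), T k := by
  classical
  set P := Fintype.piFinset (fun _ : Fin n => range Nb) with hP
  set S := P.filter (fun k => ∀ a b : Fin n, a < b → k b < k a) with hS
  have inj : ∀ (k : Fin n → ℕ), (∀ a b : Fin n, a < b → k b < k a) → Function.Injective k := by
    intro k hk a b hab
    rcases lt_trichotomy a b with h | h | h
    · exact absurd hab (hk a b h).ne'
    · exact h
    · exact absurd hab (hk b a h).ne
  rw [← Finset.sum_filter_add_sum_filter_not P (fun k => Function.Injective k) T]
  have h2 : ∑ k ∈ P.filter (fun k => ¬ Function.Injective k), T k = 0 :=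
    Finset.sum_eq_zero fun k hk => h0 k (mem_filter.mp hk).2
  rw [h2, add_zero]
  have key : ∑ p ∈ S ×ˢ (univ : Finset (Equiv.Perm (Fin n))), T (p.1 ∘ p.2)
      = ∑ k ∈ P.filter (fun k => Function.Injective k), T k := by
    refine Finset.sum_bij (fun p _ => p.1 ∘ p.2) ?_ ?_ ?_ ?_
    · rintro ⟨k₀, π⟩ hp
      obtain ⟨hk₀, -⟩ := Finset.mem_product.mp hp
      obtain ⟨hk₀P, hanti⟩ := mem_filter.mp hk₀
      refine mem_filter.mpr ⟨?_, (inj k₀ hanti).comp π.injective⟩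
      rw [Fintype.mem_piFinset] at hk₀P ⊢
      exact fun i => hk₀P (π i)
    · rintro ⟨k₁, π₁⟩ hp ⟨k₂, π₂⟩ hq heq
      obtain ⟨hk₁, -⟩ := Finset.mem_product.mp hp
      obtain ⟨hk₂, -⟩ := Finset.mem_product.mp hq
      have hanti₁ := (mem_filter.mp hk₁).2
      have hanti₂ := (mem_filter.mp hk₂).2
      have him : Finset.image k₁ univ = Finset.image k₂ univ := by
        ext x
        simp only [Finset.mem_image]
        constructor
        · rintro ⟨i, -, rfl⟩
          exact ⟨π₂ (π₁.symm i), mem_univ _, by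
            have := congrFun heq (π₁.symm i)
            simp only [Function.comp_apply, Equiv.apply_symm_apply] at this
            exact this.symm⟩
        · rintro ⟨i, -, rfl⟩
          exact ⟨π₁ (π₂.symm i), mem_univ _, by
            have := congrFun heq (π₂.symm i)
            simp only [Function.comp_apply, Equiv.apply_symm_apply] at this
            exact this⟩
      have hk₀eq : k₁ = k₂ := strictAnti_eq_of_image_eq k₁ k₂ hanti₁ hanti₂ him
      subst hk₀eq
      have hπ : π₁ = π₂ := by
        apply Equiv.ext
        intro i
        exact inj k₁ hanti₁ (congrFun heq i)
      rw [hπ]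
    · intro k hk
      obtain ⟨hkP, hkinj⟩ := mem_filter.mp hk
      have hcard : (Finset.image k univ).card = n := by
        rw [Finset.card_image_of_injective _ hkinj, card_univ, Fintype.card_fin]
      set iso := (Finset.image k univ).orderIsoOfFin hcard with hiso
      set k₀ : Fin n → ℕ := fun a => (iso (Fin.rev a) : ℕ) with hk₀
      have hmem : ∀ i : Fin n, k i ∈ Finset.image k univ :=
        fun i => Finset.mem_image_of_mem _ (mem_univ _)
      have hbij : Function.Bijective (fun i => Fin.rev (iso.symm ⟨k i, hmem i⟩)) := by
        rw [← Finite.injective_iff_bijective]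
        intro i j hij
        have h1 : iso.symm ⟨k i, hmem i⟩ = iso.symm ⟨k j, hmem j⟩ := Fin.rev_injective hij
        have h2 : (⟨k i, hmem i⟩ : {x // x ∈ Finset.image k univ}) = ⟨k j, hmem j⟩ :=
          iso.symm.injective h1
        exact hkinj (congrArg Subtype.val h2)
      set π : Equiv.Perm (Fin n) := Equiv.ofBijective _ hbij with hπ
      have hcomp : k₀ ∘ π = k := by
        funext i
        show (iso (Fin.rev (Fin.rev (iso.symm ⟨k i, hmem i⟩))) : ℕ) = k i
        rw [Fin.rev_rev, OrderIso.apply_symm_apply]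
      have hanti : ∀ a b : Fin n, a < b → k₀ b < k₀ a := by
        intro a b hab
        exact Subtype.coe_lt_coe.mpr (iso.strictMono (Fin.rev_lt_rev.mpr hab))
      have hk₀P : k₀ ∈ P := by
        rw [Fintype.mem_piFinset]
        intro a
        have := (iso (Fin.rev a)).2
        obtain ⟨i, -, hki⟩ := Finset.mem_image.mp this
        rw [Fintype.mem_piFinset] at hkP
        show (iso (Fin.rev a) : ℕ) ∈ range Nb
        rw [← hki]
        exact hkP i
      exact ⟨(k₀, π), Finset.mem_product.mpr ⟨mem_filter.mpr ⟨hk₀P, hanti⟩, mem_univ _⟩, hcomp⟩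
    · intro p _
      rfl
  rw [← key, Finset.sum_product]
  have : ∀ k₀ ∈ S, (∑ π : Equiv.Perm (Fin n), T (k₀ ∘ π)) = (n.factorial : ℂ) * T k₀ := by
    intro k₀ _
    have : (∑ π : Equiv.Perm (Fin n), T (k₀ ∘ π)) = ∑ π : Equiv.Perm (Fin n), T k₀ :=
      Finset.sum_congr rfl fun π _ => hperm k₀ π
    rw [this, Finset.sum_const, card_univ, Fintype.card_perm, Fintype.card_fin,
      nsmul_eq_mul]
  rw [Finset.sum_congr rfl this, ← Finset.mul_sum]

lemma strictAnti_min {n : ℕ} (k : Fin n → ℕ)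
    (hk : ∀ a b : Fin n, a < b → k b < k a) (hlt : n - 1 < n) (c : Fin n) :
    k ⟨n - 1, hlt⟩ + (n - 1 - c.1) ≤ k c := by
  have h := strictAnti_plus k hk c ⟨n - 1, hlt⟩ (by
    rw [Fin.le_def]
    have := c.2
    simp
    omega)
  have hc := c.2
  simp only [Fin.val_mk] at h ⊢
  omega

lemma strictAnti_max {n : ℕ} (k : Fin n → ℕ)
    (hk : ∀ a b : Fin n, a < b → k b < k a) (h0 : 0 < n) (c : Fin n) :
    k c + c.1 ≤ k ⟨0, h0⟩ := by
  have h := strictAnti_plus k hk ⟨0, h0⟩ c (by rw [Fin.le_def]; simp)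
  simp only [Fin.val_mk] at h
  omega

/-- the partition associated to a strictly decreasing sequence -/
def lamOf (n : ℕ) (k : Fin n → ℕ) (a : Fin n) : ℕ := k a - (n - a.1)

lemma hcomplete_neg (m : ℕ) (i : Fin (2*m)) (r : ℤ) (hr : r < 0) : hcomplete m i r = 0 := by
  funext e
  show (if _ then _ else _) = _
  rw [if_neg]
  · rfl
  · rintro ⟨h0, -⟩
    omega

lemma stepF (hm : 0 < m) (hn : 0 < n) (k : Fin n → ℕ)
    (hge : ∀ a : Fin n, n - a.1 ≤ k a) :
    MvPowerSeries.coeff (R := ℂ) d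
        (∏ t, (Matrix.of fun i j : Fin n =>
          hcomplete m t ((k i : ℤ) - (((j : ℕ) : ℤ) + 1))).det)
      = MvPowerSeries.coeff (R := ℂ) d (∏ t, schurJT m n t (lamOf n k)) := by
  congr 1
  have key : ∀ t : Fin (2*m), (Matrix.of fun i j : Fin n =>
      hcomplete m t ((k i : ℤ) - (((j : ℕ) : ℤ) + 1))).det
      = ((Equiv.Perm.sign (Fin.revPerm : Equiv.Perm (Fin n)) : ℤ) : MvPowerSeries (Fin (2*m) × ℕ) ℂ)
          * schurJT m n t (lamOf n k) := by
    intro t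
    have hmat : (Matrix.of fun i j : Fin n => hcomplete m t ((k i : ℤ) - (((j : ℕ) : ℤ) + 1)))
        = (Matrix.of fun a b : Fin n =>
            hcomplete m t ((lamOf n k a : ℤ) - (a.1 : ℤ) + (b.1 : ℤ))).submatrix
              id (Fin.revPerm : Equiv.Perm (Fin n)) := by
      ext i j
      simp only [Matrix.submatrix_apply, Matrix.of_apply, id_eq, Fin.revPerm_apply, Fin.val_rev]
      have hki := hge i
      have hi := i.2
      have hj := j.2
      have harg : ((k i : ℕ) : ℤ) - (((j : ℕ) : ℤ) + 1)
          = ((lamOf n k i : ℕ) : ℤ) - (i.1 : ℤ) + ((n - (j.1 + 1) : ℕ) : ℤ) := by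
        simp only [lamOf]
        have e1 : (i.1 : ℕ) ≤ n := by omega
        have e2 : (j.1 + 1 : ℕ) ≤ n := hj
        push_cast [Nat.cast_sub hki, Nat.cast_sub e1, Nat.cast_sub e2]
        ring
      rw [harg]
    rw [hmat, Matrix.det_permute']
    rfl
  calc (∏ t, (Matrix.of fun i j : Fin n =>
          hcomplete m t ((k i : ℤ) - (((j : ℕ) : ℤ) + 1))).det)
      = ∏ t : Fin (2*m), (((Equiv.Perm.sign (Fin.revPerm : Equiv.Perm (Fin n)) : ℤ) :
            MvPowerSeries (Fin (2*m) × ℕ) ℂ) * schurJT m n t (lamOf n k)) :=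
        Finset.prod_congr rfl fun t _ => key t
    _ = (((Equiv.Perm.sign (Fin.revPerm : Equiv.Perm (Fin n)) : ℤ) :
            MvPowerSeries (Fin (2*m) × ℕ) ℂ)) ^ (2*m) * ∏ t, schurJT m n t (lamOf n k) := by
        rw [Finset.prod_mul_distrib, Finset.prod_const, card_univ, Fintype.card_fin]
    _ = ∏ t, schurJT m n t (lamOf n k) := by
        rw [units_int_cast_pow_even, one_mul]

end main

/-- Gessel type identity: in the ring of symmetric functions (in `2m` countable
alphabets), `∑_{λ : ℓ(λ) ≤ n} s_λ(x⁽¹⁾)⋯s_λ(x⁽²ᵐ⁾)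
= Det^[2m](∑_{k≥0} h_{k-i₁}(x⁽¹⁾)⋯h_{k-i₂ₘ}(x⁽²ᵐ⁾))`, read coefficientwise;
in each degree only partitions with `|λ|` bounded by the degree contribute. -/
theorem schur_sum_hyperdeterminant_gessel (m n : ℕ) (hm : 0 < m) (hn : 0 < n)
    (d : (Fin (2*m) × ℕ) →₀ ℕ) :
    (∑ lam ∈ (Finset.univ :
          Finset (Fin n → Fin ((d.sum fun _ e => e) + 1))).filter
        (fun lam => ∀ j k : Fin n, j ≤ k → (lam k : ℕ) ≤ (lam j : ℕ)),
      MvPowerSeries.coeff (R := ℂ) d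
        (∏ i : Fin (2*m), schurJT m n i (fun a => (lam a : ℕ))))
    = MvPowerSeries.coeff (R := ℂ) d (hdet m n (gesselEntry m n)) := by
  classical
  set T : (Fin n → ℕ) → ℂ := fun k => MvPowerSeries.coeff (R := ℂ) d
    (∏ t, (Matrix.of fun i j : Fin n =>
      hcomplete m t ((k i : ℤ) - (((j : ℕ) : ℤ) + 1))).det) with hT
  -- Step 1: expand the hyperdeterminant and the Gessel entries
  have hrhs1 : MvPowerSeries.coeff (R := ℂ) d (hdet m n (gesselEntry m n))
      = (n.factorial : ℂ)⁻¹ * ∑ σ : Fin (2*m) → Equiv.Perm (Fin n),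
          (∏ t, (psgn (σ t) : ℂ)) *
            MvPowerSeries.coeff (R := ℂ) d (∏ i : Fin n, gesselEntry m n (fun t => σ t i)) := by
    rw [hdet, map_smul, smul_eq_mul, map_sum]
    congr 1
    refine Finset.sum_congr rfl fun σ _ => ?_
    have hcast : (∏ t, psgn (σ t) : MvPowerSeries (Fin (2*m) × ℕ) ℂ)
        = algebraMap ℂ (MvPowerSeries (Fin (2*m) × ℕ) ℂ) (∏ t, (psgn (σ t) : ℂ)) := by
      rw [map_prod]
      exact Finset.prod_congr rfl fun t _ => by rw [psgn, psgn, map_intCast]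
    rw [hcast, ← Algebra.smul_def, map_smul, smul_eq_mul]
  -- Step 2: per k, resum the permutations into a product of determinants
  have hkey : ∀ k : Fin n → ℕ,
      (∑ σ : Fin (2*m) → Equiv.Perm (Fin n), (∏ t, (psgn (σ t) : ℂ)) *
        MvPowerSeries.coeff (R := ℂ) d
          (∏ i : Fin n, ∏ t, hcomplete m t ((k i : ℤ) - ((σ t i : ℕ) + 1)))) = T k := by
    intro k
    have hpd : (∏ t, (Matrix.of fun i j : Fin n =>
        hcomplete m t ((k i : ℤ) - (((j : ℕ) : ℤ) + 1))).det)
        = ∑ σ : Fin (2*m) → Equiv.Perm (Fin n),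
            algebraMap ℂ (MvPowerSeries (Fin (2*m) × ℕ) ℂ) (∏ t, psgn (σ t)) *
              ∏ t, ∏ a, hcomplete m t ((k a : ℤ) - (((σ t a : ℕ) : ℤ) + 1)) :=
      prod_det (fun t i j => hcomplete m t ((k i : ℤ) - (((j : ℕ) : ℤ) + 1)))
    rw [hT]
    simp only
    rw [hpd, map_sum]
    refine Finset.sum_congr rfl fun σ _ => ?_
    rw [← Algebra.smul_def, map_smul, smul_eq_mul]
    congr 1
    · congr 1
      rw [Finset.prod_comm]
  -- Step 3: the big resummation
  have hrhs2 : MvPowerSeries.coeff (R := ℂ) d (hdet m n (gesselEntry m n))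
      = (n.factorial : ℂ)⁻¹ *
          ∑ k ∈ Fintype.piFinset (fun _ : Fin n => range (wtf d + n + 1)), T k := by
    rw [hrhs1]
    congr 1
    have : ∀ σ : Fin (2*m) → Equiv.Perm (Fin n),
        (∏ t, (psgn (σ t) : ℂ)) *
          MvPowerSeries.coeff (R := ℂ) d (∏ i : Fin n, gesselEntry m n (fun t => σ t i))
        = ∑ k ∈ Fintype.piFinset (fun _ : Fin n => range (wtf d + n + 1)),
            (∏ t, (psgn (σ t) : ℂ)) * MvPowerSeries.coeff (R := ℂ) d
              (∏ i : Fin n, ∏ t, hcomplete m t ((k i : ℤ) - ((σ t i : ℕ) + 1))) := by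
      intro σ
      rw [stepB m n d hm hn σ, Finset.mul_sum]
    rw [Finset.sum_congr rfl fun σ _ => this σ, Finset.sum_comm]
    exact Finset.sum_congr rfl fun k _ => hkey k
  -- Step 4: orbit sum over permutations of k
  have hzero : ∀ k : Fin n → ℕ, ¬ Function.Injective k → T k = 0 := by
    intro k hkinj
    have : ∃ i j : Fin n, i ≠ j ∧ k i = k j := by
      by_contra h
      push_neg at h
      exact hkinj fun i j hij => by
        by_contra hne
        exact (h i j hne) hij
    obtain ⟨i, j, hij, hkij⟩ := this
    have hdet0 : ∀ t : Fin (2*m), (Matrix.of fun i j : Fin n =>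
        hcomplete m t ((k i : ℤ) - (((j : ℕ) : ℤ) + 1))).det = 0 := by
      intro t
      apply Matrix.det_zero_of_row_eq hij
      funext b
      simp only [Matrix.of_apply, hkij]
    rw [hT]
    simp only
    rw [Finset.prod_eq_zero (mem_univ (⟨0, by omega⟩ : Fin (2*m))) (hdet0 _), map_zero]
  have hperm : ∀ (k : Fin n → ℕ) (π : Equiv.Perm (Fin n)), T (k ∘ π) = T k := by
    intro k π
    rw [hT]
    simp only
    congr 1
    have hsub : ∀ t : Fin (2*m), (Matrix.of fun i j : Fin n =>
        hcomplete m t ((k (π i) : ℤ) - (((j : ℕ) : ℤ) + 1)))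
        = (Matrix.of fun i j : Fin n =>
            hcomplete m t ((k i : ℤ) - (((j : ℕ) : ℤ) + 1))).submatrix π id := by
      intro t
      ext i j
      simp [Matrix.submatrix_apply]
    calc (∏ t, (Matrix.of fun i j : Fin n =>
            hcomplete m t (((k ∘ π) i : ℤ) - (((j : ℕ) : ℤ) + 1))).det)
        = ∏ t : Fin (2*m), (((Equiv.Perm.sign π : ℤ) : MvPowerSeries (Fin (2*m) × ℕ) ℂ) *
            (Matrix.of fun i j : Fin n =>
              hcomplete m t ((k i : ℤ) - (((j : ℕ) : ℤ) + 1))).det) := by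
          refine Finset.prod_congr rfl fun t _ => ?_
          rw [show (Matrix.of fun i j : Fin n =>
              hcomplete m t (((k ∘ π) i : ℤ) - (((j : ℕ) : ℤ) + 1)))
            = (Matrix.of fun i j : Fin n =>
                hcomplete m t ((k i : ℤ) - (((j : ℕ) : ℤ) + 1))).submatrix π id from hsub t,
            Matrix.det_permute]
      _ = _ := by
          rw [Finset.prod_mul_distrib, Finset.prod_const, card_univ, Fintype.card_fin,
            units_int_cast_pow_even, one_mul]
  have horb := orbit_sum n hn (wtf d + n + 1) T hzero hperm
  have hfact : ((n.factorial : ℂ))⁻¹ * ((n.factorial : ℂ) *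
      ∑ k ∈ (Fintype.piFinset (fun _ : Fin n => range (wtf d + n + 1))).filter
        (fun k => ∀ a b : Fin n, a < b → k b < k a), T k)
      = ∑ k ∈ (Fintype.piFinset (fun _ : Fin n => range (wtf d + n + 1))).filter
        (fun k => ∀ a b : Fin n, a < b → k b < k a), T k := by
    have hne : (n.factorial : ℂ) ≠ 0 := Nat.cast_ne_zero.mpr (Nat.factorial_ne_zero n)
    rw [← mul_assoc, inv_mul_cancel₀ hne, one_mul]
  rw [hrhs2, horb, hfact]
  -- Step 5: split off the degenerate strictly decreasing sequences (min = 0)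
  set S := (Fintype.piFinset (fun _ : Fin n => range (wtf d + n + 1))).filter
    (fun k => ∀ a b : Fin n, a < b → k b < k a) with hS
  have hlt : n - 1 < n := Nat.sub_lt hn Nat.one_pos
  rw [← Finset.sum_filter_add_sum_filter_not S (fun k => 1 ≤ k ⟨n - 1, hlt⟩) T]
  have hbad : ∑ k ∈ S.filter (fun k => ¬ 1 ≤ k ⟨n - 1, hlt⟩), T k = 0 := by
    apply Finset.sum_eq_zero
    intro k hk
    obtain ⟨-, hk0'⟩ := mem_filter.mp hk
    have hk0 : k ⟨n - 1, hlt⟩ = 0 := by omega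
    rw [hT]
    simp only
    have hdet0 : (Matrix.of fun i j : Fin n =>
        hcomplete m (⟨0, by omega⟩ : Fin (2*m)) ((k i : ℤ) - (((j : ℕ) : ℤ) + 1))).det = 0 := by
      apply Matrix.det_eq_zero_of_row_eq_zero ⟨n - 1, hlt⟩
      intro j
      simp only [Matrix.of_apply, hk0]
      exact hcomplete_neg m _ _ (by push_cast; omega)
    rw [Finset.prod_eq_zero (mem_univ (⟨0, by omega⟩ : Fin (2*m))) hdet0, map_zero]
  rw [hbad, add_zero]
  -- Step 6: rewrite the good terms as Schur function products
  have hgoodS : ∀ k ∈ S.filter (fun k => 1 ≤ k ⟨n - 1, hlt⟩),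
      T k = MvPowerSeries.coeff (R := ℂ) d (∏ t, schurJT m n t (lamOf n k)) := by
    intro k hk
    obtain ⟨hkS, hk1⟩ := mem_filter.mp hk
    obtain ⟨-, hanti⟩ := mem_filter.mp hkS
    have hge : ∀ a : Fin n, n - a.1 ≤ k a := by
      intro a
      have := strictAnti_min k hanti hlt a
      have := a.2
      omega
    exact stepF m n d hm hn k hge
  rw [Finset.sum_congr rfl hgoodS]
  -- Step 7: the bijection with partitions
  have hNd : wtf d = (d.sum fun _ e => e) := rfl
  refine Finset.sum_nbij' (fun lam => fun a : Fin n => (lam a : ℕ) + (n - a.1))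
    (fun k => fun a : Fin n => (⟨min (k a - (n - a.1)) (d.sum fun _ e => e),
      Nat.lt_succ_of_le (min_le_right _ _)⟩ : Fin ((d.sum fun _ e => e) + 1)))
    ?_ ?_ ?_ ?_ ?_
  · -- membership forward
    intro lam hlam
    obtain ⟨-, hdec⟩ := mem_filter.mp hlam
    refine mem_filter.mpr ⟨mem_filter.mpr ⟨?_, ?_⟩, ?_⟩
    · rw [Fintype.mem_piFinset]
      intro a
      rw [mem_range]
      show (lam a : ℕ) + (n - a.1) < wtf d + n + 1
      have h1 : (lam a : ℕ) ≤ (d.sum fun _ e => e) := Nat.lt_succ_iff.mp (lam a).2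
      omega
    · intro a b hab
      show (lam b : ℕ) + (n - b.1) < (lam a : ℕ) + (n - a.1)
      have h1 := hdec a b hab.le
      have h2 := Fin.lt_def.mp hab
      have := b.2
      omega
    · show 1 ≤ (lam ⟨n - 1, hlt⟩ : ℕ) + (n - (n - 1))
      omega
  · -- membership backward
    intro k hk
    obtain ⟨hkS, hk1⟩ := mem_filter.mp hk
    obtain ⟨hkP, hanti⟩ := mem_filter.mp hkS
    rw [Fintype.mem_piFinset] at hkP
    refine mem_filter.mpr ⟨mem_univ _, ?_⟩
    intro a b hab
    show min (k b - (n - b.1)) (d.sum fun _ e => e) ≤ min (k a - (n - a.1)) (d.sum fun _ e => e)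
    have h1 := strictAnti_plus k hanti a b hab
    have h2a := strictAnti_min k hanti hlt a
    have h2b := strictAnti_min k hanti hlt b
    have h3a := strictAnti_max k hanti hn a
    have h3b := strictAnti_max k hanti hn b
    have hk0 := hkP (⟨0, hn⟩ : Fin n)
    rw [mem_range] at hk0
    have := a.2
    have := b.2
    have := Fin.le_def.mp hab
    omega
  · -- left inverse
    intro lam hlam
    funext a
    apply Fin.ext
    show min (((lam a : ℕ) + (n - a.1)) - (n - a.1)) (d.sum fun _ e => e) = (lam a : ℕ)
    have h1 : (lam a : ℕ) ≤ (d.sum fun _ e => e) := Nat.lt_succ_iff.mp (lam a).2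
    omega
  · -- right inverse
    intro k hk
    obtain ⟨hkS, hk1⟩ := mem_filter.mp hk
    obtain ⟨hkP, hanti⟩ := mem_filter.mp hkS
    rw [Fintype.mem_piFinset] at hkP
    funext a
    show min (k a - (n - a.1)) (d.sum fun _ e => e) + (n - a.1) = k a
    have h2 := strictAnti_min k hanti hlt a
    have h3 := strictAnti_max k hanti hn a
    have hk0 := hkP (⟨0, hn⟩ : Fin n)
    rw [mem_range] at hk0
    have := a.2
    omega
  · -- summands agree
    intro lam hlam
    have hlamOf : lamOf n (fun a : Fin n => (lam a : ℕ) + (n - a.1))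
        = fun a => (lam a : ℕ) := by
      funext a
      simp only [lamOf]
      omega
    rw [hlamOf]

end
end

section
/- For a Laurent polynomial f(z) = ∑_{k ∈ ℤ} d(k) z^k (finitely many nonzero Fourier coefficients d(k)) and positive integers m, n, the Toeplitz hyperdeterminant D^{[2m]}_n(f) = Det^{[2m]}(d(i_1+···+i_m − i_{m+1} − ··· − i_{2m}))_{1≤i_1,...,i_{2m}≤n} equals (1/n!) times the constant term (in z_1,...,z_n) of f(z_1)···f(z_n) · ∏_{1≤i<j≤n}(z_i − z_j)^m (z_i^{−1} − z_j^{−1})^m. -/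
open Finset

noncomputable section

/-- first half of the index tuple -/
def loHalf {m : ℕ} (s : Fin m) : Fin (2*m) := ⟨s.1, by have := s.2; omega⟩
/-- second half of the index tuple -/
def hiHalf {m : ℕ} (s : Fin m) : Fin (2*m) := ⟨s.1 + m, by have := s.2; omega⟩

/-- the Toeplitz hyperdeterminant entry array
`d(i₁ + ⋯ + iₘ - i_{m+1} - ⋯ - i_{2m})` (1-based indices; the shifts cancel). -/
def toeplitzEntry (m n : ℕ) (d : ℤ → ℂ) : (Fin (2*m) → Fin n) → ℂ :=
  fun v => d ((∑ s : Fin m, (((v (loHalf s)) : ℕ) + 1 : ℤ))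
    - ∑ s : Fin m, (((v (hiHalf s)) : ℕ) + 1 : ℤ))

/-- the variable `z_k` in the multivariate Laurent polynomial ring -/
def zvar (n : ℕ) (k : Fin n) : AddMonoidAlgebra ℂ (Fin n → ℤ) :=
  AddMonoidAlgebra.single (Pi.single k (1:ℤ)) (1:ℂ)

/-- the inverse variable `z_k⁻¹` -/
def zinv (n : ℕ) (k : Fin n) : AddMonoidAlgebra ℂ (Fin n → ℤ) :=
  AddMonoidAlgebra.single (-Pi.single k (1:ℤ)) (1:ℂ)

/-- the Laurent polynomial `f(z_k) = ∑_j d(j) z_k^j` -/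
def lsubst (n : ℕ) (d : ℤ → ℂ) (hd : (Function.support d).Finite) (k : Fin n) :
    AddMonoidAlgebra ℂ (Fin n → ℤ) :=
  ∑ j ∈ hd.toFinset, d j • AddMonoidAlgebra.single (Pi.single k j) (1:ℂ)

open Matrix

-- ===== auxiliary lemmas =====

theorem prodSmul {ι R : Type*} [CommRing R] [Algebra ℂ R] (s : Finset ι) (c : ι → ℂ) (x : ι → R) :
    ∏ i ∈ s, c i • x i = (∏ i ∈ s, c i) • ∏ i ∈ s, x i := by
  induction s using Finset.cons_induction with
  | empty => simp
  | cons a s ha ih => rw [prod_cons, prod_cons, prod_cons, ih, smul_mul_smul_comm]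

/-- Vandermonde determinant of monomial variables. -/
theorem vdet (n : ℕ) (a : Fin n → Fin n → ℤ) :
    Matrix.det (Matrix.vandermonde (fun k => AddMonoidAlgebra.single (a k) (1:ℂ)))
      = ∑ σ : Equiv.Perm (Fin n),
          AddMonoidAlgebra.single (∑ i : Fin n, ((σ i : ℕ) • a i)) (psgn σ : ℂ) := by
  rw [← Matrix.det_transpose, Matrix.det_apply']
  refine Finset.sum_congr rfl fun σ _ => ?_
  have h1 : (∏ i, (Matrix.vandermonde (fun k => AddMonoidAlgebra.single (a k) (1:ℂ)))ᵀ (σ i) i)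
      = AddMonoidAlgebra.single (∑ i : Fin n, ((σ i : ℕ) • a i)) (1:ℂ) := by
    simp only [Matrix.transpose_apply, Matrix.vandermonde_apply,
      AddMonoidAlgebra.single_pow, one_pow, AddMonoidAlgebra.prod_single, Finset.prod_const_one]
  rw [h1, AddMonoidAlgebra.intCast_def, AddMonoidAlgebra.single_mul_single, zero_add, mul_one]
  rfl

theorem zvar_vdet (n : ℕ) :
    Matrix.det (Matrix.vandermonde (zvar n))
      = ∑ σ : Equiv.Perm (Fin n),
          AddMonoidAlgebra.single (fun k => ((σ k : ℕ) : ℤ)) (psgn σ : ℂ) := by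
  rw [show zvar n = fun k => AddMonoidAlgebra.single (Pi.single k (1:ℤ)) (1:ℂ) from rfl,
    vdet]
  refine Finset.sum_congr rfl fun σ _ => ?_
  congr 1
  funext k
  simp [Finset.sum_apply, Pi.single_apply]

theorem zinv_vdet (n : ℕ) :
    Matrix.det (Matrix.vandermonde (zinv n))
      = ∑ σ : Equiv.Perm (Fin n),
          AddMonoidAlgebra.single (fun k => -((σ k : ℕ) : ℤ)) (psgn σ : ℂ) := by
  rw [show zinv n = fun k => AddMonoidAlgebra.single (-Pi.single k (1:ℤ)) (1:ℂ) from rfl,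
    vdet]
  refine Finset.sum_congr rfl fun σ _ => ?_
  congr 1
  funext k
  simp [Finset.sum_apply, Pi.single_apply]

/-- the double product is a product of two Vandermonde determinants, to the `m`. -/
theorem vprod_eq (n m : ℕ) :
    (∏ i : Fin n, ∏ j ∈ Finset.Ioi i,
        ((zvar n i - zvar n j) ^ m * (zinv n i - zinv n j) ^ m))
    = (Matrix.det (Matrix.vandermonde (zvar n))) ^ m
      * (Matrix.det (Matrix.vandermonde (zinv n))) ^ m := by
  rw [Matrix.det_vandermonde, Matrix.det_vandermonde, ← Finset.prod_pow, ← Finset.prod_pow,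
    ← Finset.prod_mul_distrib]
  refine Finset.prod_congr rfl fun i _ => ?_
  rw [← Finset.prod_pow, ← Finset.prod_pow, ← Finset.prod_mul_distrib]
  refine Finset.prod_congr rfl fun j _ => ?_
  have h1 : zvar n i - zvar n j = -(zvar n j - zvar n i) := by ring
  have h2 : zinv n i - zinv n j = -(zinv n j - zinv n i) := by ring
  rw [h1, h2, ← mul_pow, neg_mul_neg, mul_pow]

/-- `m`-th power of a sum of singles indexed by permutations -/
theorem pow_sum_single (n m : ℕ) (e : Equiv.Perm (Fin n) → (Fin n → ℤ))
    (X : AddMonoidAlgebra ℂ (Fin n → ℤ))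
    (hX : X = ∑ σ : Equiv.Perm (Fin n), AddMonoidAlgebra.single (e σ) (psgn σ : ℂ)) :
    X ^ m = ∑ σ : Fin m → Equiv.Perm (Fin n),
      AddMonoidAlgebra.single (∑ s : Fin m, e (σ s)) (∏ s, (psgn (σ s) : ℂ)) := by
  have : X ^ m = ∏ _s : Fin m, X := by
    rw [Finset.prod_const, Finset.card_univ, Fintype.card_fin]
  rw [this, hX, Finset.prod_univ_sum]
  rw [Fintype.piFinset_univ]
  refine Finset.sum_congr rfl fun σ _ => ?_
  rw [AddMonoidAlgebra.prod_single]

/-- product of the Laurent substitutions -/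
theorem lsubst_prod (n : ℕ) (d : ℤ → ℂ) (hd : (Function.support d).Finite) :
    (∏ k : Fin n, lsubst n d hd k)
    = ∑ J ∈ Fintype.piFinset (fun _ : Fin n => hd.toFinset),
        AddMonoidAlgebra.single (J : Fin n → ℤ) (∏ k, d (J k)) := by
  unfold lsubst
  rw [Finset.prod_univ_sum]
  refine Finset.sum_congr rfl fun J _ => ?_
  rw [prodSmul, AddMonoidAlgebra.prod_single, Finset.prod_const_one, Finset.univ_sum_single,
    AddMonoidAlgebra.smul_single, smul_eq_mul, mul_one]

theorem innerJsum (n : ℕ) (d : ℤ → ℂ) (hd : (Function.support d).Finite)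
    (D : Fin n → ℤ) (c : ℂ) :
    ∑ J ∈ Fintype.piFinset (fun _ : Fin n => hd.toFinset),
      (if J = D then c * ∏ k, d (J k) else 0)
    = c * ∏ k, d (D k) := by
  rw [Finset.sum_ite_eq' _ D (fun J => c * ∏ k, d (J k))]
  split_ifs with h
  · rfl
  · rw [Fintype.mem_piFinset] at h
    push_neg at h
    obtain ⟨k, hk⟩ := h
    have hdk : d (D k) = 0 := by
      by_contra h'
      exact hk (hd.mem_toFinset.mpr h')
    rw [Finset.prod_eq_zero (Finset.mem_univ k) hdk, mul_zero]

-- ===== index splitting =====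

def e2 (m : ℕ) : Fin m ⊕ Fin m ≃ Fin (2*m) :=
  finSumFinEquiv.trans (finCongr (two_mul m).symm)

theorem e2_inl (m : ℕ) (s : Fin m) : e2 m (Sum.inl s) = loHalf s := by
  apply Fin.ext; simp [e2, loHalf]

theorem e2_inr (m : ℕ) (s : Fin m) : e2 m (Sum.inr s) = hiHalf s := by
  apply Fin.ext; simp [e2, hiHalf]

def Eq2 (m : ℕ) (P : Type*) : ((Fin m → P) × (Fin m → P)) ≃ (Fin (2*m) → P) :=
  (Equiv.sumArrowEquivProdArrow _ _ _).symm.trans (Equiv.arrowCongr (e2 m) (Equiv.refl _))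

theorem Eq2_lo {P : Type*} (m : ℕ) (p : (Fin m → P) × (Fin m → P)) (s : Fin m) :
    Eq2 m P p (loHalf s) = p.1 s := by
  rw [← e2_inl]
  simp [Eq2, Equiv.arrowCongr, Equiv.sumArrowEquivProdArrow]

theorem Eq2_hi {P : Type*} (m : ℕ) (p : (Fin m → P) × (Fin m → P)) (s : Fin m) :
    Eq2 m P p (hiHalf s) = p.2 s := by
  rw [← e2_inr]
  simp [Eq2, Equiv.arrowCongr, Equiv.sumArrowEquivProdArrow]

theorem prod_split {R : Type*} [CommMonoid R] (m : ℕ) (g : Fin (2*m) → R) :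
    ∏ t, g t = (∏ s : Fin m, g (loHalf s)) * ∏ s : Fin m, g (hiHalf s) := by
  rw [← Fintype.prod_equiv (e2 m) (fun u => g (e2 m u)) g (fun u => rfl), Fintype.prod_sum_type]
  simp only [e2_inl, e2_inr]

theorem eval0 {ι₁ ι₂ ι₃ G : Type*} [AddCommMonoid G] [DecidableEq G]
    (S1 : Finset ι₁) (S2 : Finset ι₂) (S3 : Finset ι₃)
    (μ : ι₁ → ι₂ → ι₃ → G) (c : ι₁ → ι₂ → ι₃ → ℂ) :
    (∑ a ∈ S1, ∑ b ∈ S2, ∑ j ∈ S3, AddMonoidAlgebra.single (μ a b j) (c a b j)).coeff (0 : G)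
      = ∑ a ∈ S1, ∑ b ∈ S2, ∑ j ∈ S3, if μ a b j = 0 then c a b j else 0 := by
  rw [AddMonoidAlgebra.coeff_sum, Finset.sum_apply']
  refine Finset.sum_congr rfl fun a _ => ?_
  rw [AddMonoidAlgebra.coeff_sum, Finset.sum_apply']
  refine Finset.sum_congr rfl fun b _ => ?_
  rw [AddMonoidAlgebra.coeff_sum, Finset.sum_apply']
  refine Finset.sum_congr rfl fun j _ => ?_
  rw [AddMonoidAlgebra.coeff_single]
  exact Finsupp.single_apply

-- ===== the main theorem =====


/-- Heine–Szegő formula for Toeplitz hyperdeterminants, constant term form: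
`D_n^[2m](f) = (1/n!)·CT( f(z₁)⋯f(zₙ) ∏_{i<j}(z_i-z_j)^m (z_i⁻¹-z_j⁻¹)^m )`. -/

theorem heine_szego_hyperdeterminant (m n : ℕ) (hm : 0 < m) (hn : 0 < n)
    (d : ℤ → ℂ) (hd : (Function.support d).Finite) :
    hdet m n (toeplitzEntry m n d)
      = ((n.factorial : ℂ)⁻¹) *
          ((∏ k : Fin n, lsubst n d hd k) *
            ∏ i : Fin n, ∏ j ∈ Finset.Ioi i,
              ((zvar n i - zvar n j) ^ m * (zinv n i - zinv n j) ^ m)).coeff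
          (0 : Fin n → ℤ) := by
  -- RHS computation
  rw [mul_comm (∏ k : Fin n, lsubst n d hd k), vprod_eq,
    pow_sum_single n m _ _ (zvar_vdet n), pow_sum_single n m _ _ (zinv_vdet n),
    lsubst_prod]
  simp only [Finset.sum_mul, Finset.mul_sum, AddMonoidAlgebra.single_mul_single]
  -- resolve the constant-term conditions
  have key : ∀ (σ τ : Fin m → Equiv.Perm (Fin n)),
      (∑ J ∈ Fintype.piFinset (fun _ : Fin n => hd.toFinset),
        if ((∑ s : Fin m, fun k => ((σ s k : ℕ) : ℤ))
            + (∑ s : Fin m, fun k => -((τ s k : ℕ) : ℤ)) + J = 0)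
        then ((∏ s, (psgn (σ s) : ℂ)) * ∏ s, (psgn (τ s) : ℂ)) * ∏ k, d (J k) else 0)
      = ((∏ s, (psgn (σ s) : ℂ)) * ∏ s, (psgn (τ s) : ℂ))
          * ∏ k, d (∑ s : Fin m, ((τ s k : ℕ) : ℤ) - ∑ s : Fin m, ((σ s k : ℕ) : ℤ)) := by
    intro σ τ
    have hD : ∀ J : Fin n → ℤ,
        (((∑ s : Fin m, fun k => ((σ s k : ℕ) : ℤ))
            + (∑ s : Fin m, fun k => -((τ s k : ℕ) : ℤ)) + J = 0)
          ↔ J = fun k => ∑ s : Fin m, ((τ s k : ℕ) : ℤ) - ∑ s : Fin m, ((σ s k : ℕ) : ℤ)) := by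
      intro J
      constructor
      · intro h
        funext k
        have := congrFun h k
        simp only [Pi.add_apply, Pi.zero_apply, Finset.sum_apply,
          Finset.sum_neg_distrib] at this
        linarith
      · intro h
        funext k
        subst h
        simp only [Pi.add_apply, Pi.zero_apply, Finset.sum_apply, Finset.sum_neg_distrib,
          Finset.sum_sub_distrib]
        ring
    rw [Finset.sum_congr rfl fun J _ => if_congr (hD J) rfl rfl]
    rw [innerJsum n d hd _ _]
  rw [Finset.sum_comm]
  rw [Finset.sum_congr rfl fun τ _ => Finset.sum_comm]
  rw [eval0]
  rw [Finset.sum_congr rfl fun τ _ => Finset.sum_congr rfl fun σ _ => key σ τ]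
  -- LHS computation
  rw [hdet, smul_eq_mul]
  congr 1
  rw [← Equiv.sum_comp (Eq2 m (Equiv.Perm (Fin n)))
    (fun σ : Fin (2*m) → Equiv.Perm (Fin n) =>
      (∏ t, (psgn (σ t) : ℂ)) * ∏ i, toeplitzEntry m n d (fun t => σ t i)),
    Fintype.sum_prod_type]
  refine Finset.sum_congr rfl fun τ _ => Finset.sum_congr rfl fun σ _ => ?_
  have hsgn : (∏ t, (psgn (Eq2 m (Equiv.Perm (Fin n)) (τ, σ) t) : ℂ))
      = (∏ s, (psgn (τ s) : ℂ)) * ∏ s, (psgn (σ s) : ℂ) := by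
    rw [prod_split]
    simp only [Eq2_lo, Eq2_hi]
  have hent : ∀ i : Fin n,
      toeplitzEntry m n d (fun t => Eq2 m (Equiv.Perm (Fin n)) (τ, σ) t i)
      = d (∑ s : Fin m, ((τ s i : ℕ) : ℤ) - ∑ s : Fin m, ((σ s i : ℕ) : ℤ)) := by
    intro i
    unfold toeplitzEntry
    simp only [Eq2_lo, Eq2_hi]
    congr 1
    rw [Finset.sum_add_distrib, Finset.sum_add_distrib]
    ring
  rw [hsgn]
  rw [Finset.prod_congr rfl fun i _ => hent i]
  ring

end
end

section
/- Let m and n be positive integers, B = (B(i_1,...,i_{2m}))_{1≤i_k≤2n} an array satisfying the alternating property B(i_{τ_1(1)},i_{τ_1(2)},...,i_{τ_m(2m−1)},i_{τ_m(2m)}) = sgn(τ_1)···sgn(τ_m)·B(i_1,...,i_{2m}) for (τ_1,...,τ_m) ∈ (S_2)^m. Define M = (M(j_1,...,j_{2m}))_{1≤j_k≤2mn}, fully antisymmetric in its 2m arguments, by: for j_1 < j_2 < ··· < j_{2m}, M(j_1,...,j_{2m}) = B(r_1,...,r_{2m}) if there exist 1 ≤ r_1,...,r_{2m} ≤ 2n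 with j_{2s−1} = 2n(s−1) + r_{2s−1} and j_{2s} = 2n(s−1) + r_{2s} for all 1 ≤ s ≤ m, and M(j_1,...,j_{2m}) = 0 otherwise. Then Pf^{[2m]}(B) = PF^{[2m]}(M), where PF^{[2m]}(M) = (1/n!) ∑_{σ ∈ E_{2mn,2m}} sgn(σ) ∏_{i=1}^n M(σ(2m(i−1)+1),...,σ(2mi)) is Barvinok's hyperpfaffian and E_{2mn,2m} = {σ ∈ S_{2mn} : σ(2m(i−1)+1) < ··· < σ(2mi) for 1 ≤ i ≤ n}. -/
open Finset

noncomputable section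

/-- position `2m(i-1)+s` (1-based), i.e. `2m·i + s` (0-based) in `{0,…,2mn-1}` -/
def blockIdx {m n : ℕ} (i : Fin n) (s : Fin (2*m)) : Fin (2*m*n) :=
  ⟨2*m*i.1 + s.1, by
    have h1 := s.2; have h2 := i.2
    calc 2*m*i.1 + s.1 < 2*m*i.1 + 2*m := by omega
      _ = 2*m*(i.1+1) := by ring
      _ ≤ 2*m*n := Nat.mul_le_mul_left _ h2⟩

/-- the set `E_{2mn,2m}` of permutations increasing on each consecutive block
of length `2m` -/
def EsetB (m n : ℕ) : Finset (Equiv.Perm (Fin (2*m*n))) :=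
  Finset.univ.filter (fun σ => ∀ i : Fin n, ∀ s t : Fin (2*m), s < t →
    σ (blockIdx i s) < σ (blockIdx i t))

/-- Barvinok's hyperpfaffian `PF^[2m](M)` of a fully antisymmetric array `M`
of side `2mn`. -/
def hpfB (m n : ℕ) (M : (Fin (2*m) → Fin (2*m*n)) → ℂ) : ℂ :=
  ((n.factorial : ℂ)⁻¹) * ∑ σ ∈ EsetB m n,
    psgn σ * ∏ i : Fin n, M (fun s => σ (blockIdx i s))

/-! ### Auxiliary machinery for the proof -/

/-- generic equivalence `Fin a × Fin b ≃ Fin (a*b)`, `(s,x) ↦ b*s+x`. -/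
def mEquiv (a b : ℕ) (hb : 0 < b) : Fin a × Fin b ≃ Fin (a*b) where
  toFun p := ⟨b*p.1.1 + p.2.1, by
    have h1 := p.1.2; have h2 := p.2.2
    calc b*p.1.1 + p.2.1 < b*p.1.1 + b := by omega
      _ = b*(p.1.1+1) := by ring
      _ ≤ b*a := Nat.mul_le_mul_left _ h1
      _ = a*b := Nat.mul_comm _ _⟩
  invFun j := (⟨j.1/b, by
      have := j.2
      rw [Nat.div_lt_iff_lt_mul hb]; omega⟩,
    ⟨j.1 % b, Nat.mod_lt _ hb⟩)
  left_inv p := by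
    have h2 := p.2.2
    ext
    · simp [Nat.mul_add_div hb, Nat.div_eq_of_lt h2]
    · simp [Nat.mul_add_mod, Nat.mod_eq_of_lt h2]
  right_inv j := by
    ext
    show b * (j.1/b) + j.1 % b = j.1
    exact Nat.div_add_mod _ _

@[simp] lemma mEquiv_apply (a b : ℕ) (hb : 0 < b) (p : Fin a × Fin b) :
    ((mEquiv a b hb p : Fin (a*b)) : ℕ) = b*p.1.1 + p.2.1 := rfl

@[simp] lemma mEquiv_symm_apply (a b : ℕ) (hb : 0 < b) (j : Fin (a*b)) :
    (mEquiv a b hb).symm j = (⟨j.1/b, by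
      have := j.2; rw [Nat.div_lt_iff_lt_mul hb]; omega⟩,
    ⟨j.1 % b, Nat.mod_lt _ hb⟩) := rfl

def eE (m n : ℕ) : Fin (m*n) × Fin 2 ≃ Fin (2*m*n) :=
  (mEquiv (m*n) 2 (by omega)).trans (finCongr (by ring))

def eF (m n : ℕ) (hn : 0 < n) : Fin m × Fin (2*n) ≃ Fin (2*m*n) :=
  (mEquiv m (2*n) (by omega)).trans (finCongr (by ring))

def rhoE (m n : ℕ) (hm : 0 < m) (hn : 0 < n) : Equiv.Perm (Fin (m*n)) :=
  (finCongr (Nat.mul_comm m n)).trans ((mEquiv n m hm).symm.trans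
    ((Equiv.prodComm _ _).trans (mEquiv m n hn)))

def piE (m n : ℕ) (hm : 0 < m) (hn : 0 < n) : Equiv.Perm (Fin (2*m*n)) :=
  (eE m n).permCongr (Equiv.prodCongr (rhoE m n hm hn) (Equiv.refl (Fin 2)))

def psiE (m n : ℕ) (hn : 0 < n) (σvec : Fin m → Equiv.Perm (Fin (2*n))) :
    Equiv.Perm (Fin (2*m*n)) :=
  (eF m n hn).permCongr (Equiv.prodCongrRight σvec)

def PhiE (m n : ℕ) (hm : 0 < m) (hn : 0 < n) (σvec : Fin m → Equiv.Perm (Fin (2*n))) :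
    Equiv.Perm (Fin (2*m*n)) :=
  (piE m n hm hn).trans (psiE m n hn σvec)

lemma piE_apply_val (m n : ℕ) (hm : 0 < m) (hn : 0 < n) (x : Fin (2*m*n)) :
    ((piE m n hm hn) x : ℕ) = 2*(n*((x.1/2)%m) + (x.1/2)/m) + x.1%2 := by
  simp [piE, eE, rhoE, Equiv.permCongr_apply, finCongr]

lemma psiE_apply_val (m n : ℕ) (hn : 0 < n) (σvec : Fin m → Equiv.Perm (Fin (2*n)))
    (x : Fin (2*m*n)) :
    ((psiE m n hn σvec) x : ℕ)
      = 2*n*(x.1/(2*n)) + (σvec ⟨x.1/(2*n), by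
          have := x.2; rw [Nat.div_lt_iff_lt_mul (by omega)]
          have h : 2*m*n = m*(2*n) := by ring
          omega⟩ ⟨x.1%(2*n), Nat.mod_lt _ (by omega)⟩ : ℕ) := by
  simp [psiE, eF, Equiv.permCongr_apply, finCongr]

lemma psiE_apply_val' (m n : ℕ) (hn : 0 < n) (σvec : Fin m → Equiv.Perm (Fin (2*n)))
    (a : Fin m) (b : Fin (2*n)) (x : Fin (2*m*n))
    (hx : (x : ℕ) = 2*n*a.1 + b.1) :
    ((psiE m n hn σvec) x : ℕ) = 2*n*a.1 + (σvec a b : ℕ) := by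
  rw [psiE_apply_val]
  have ha : x.1/(2*n) = a.1 := by
    rw [hx, Nat.mul_add_div (by omega), Nat.div_eq_of_lt b.2]
    omega
  have hb : x.1 % (2*n) = b.1 := by
    rw [hx, Nat.mul_add_mod]; exact Nat.mod_eq_of_lt b.2
  simp only [ha, hb, Fin.eta]

lemma PhiE_apply_val (m n : ℕ) (hm : 0 < m) (hn : 0 < n)
    (σvec : Fin m → Equiv.Perm (Fin (2*n))) (i : Fin n) (t : Fin (2*m)) :
    ((PhiE m n hm hn σvec) (blockIdx i t) : ℕ)
      = 2*n*(t.1/2) + (σvec ⟨t.1/2, by have := t.2; omega⟩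
          ⟨2*i.1 + t.1%2, by have := i.2; have := t.2; omega⟩ : ℕ) := by
  have ht := t.2; have hi := i.2
  rw [show (PhiE m n hm hn σvec) = (piE m n hm hn).trans (psiE m n hn σvec) from rfl,
    Equiv.trans_apply]
  have hpi : ((piE m n hm hn) (blockIdx i t) : ℕ)
      = 2*n*(t.1/2) + (2*i.1 + t.1%2) := by
    rw [piE_apply_val]
    have hx : ((blockIdx i t : Fin (2*m*n)) : ℕ) = 2*m*i.1 + t.1 := rfl
    rw [hx]
    have e1 : 2*m*i.1 = 2*(m*i.1) := by ring
    have h2 : (2*m*i.1 + t.1)/2 = m*i.1 + t.1/2 := by omega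
    have h3 : (2*m*i.1 + t.1)%2 = t.1%2 := by omega
    rw [h2, h3]
    have h4 : (m*i.1 + t.1/2) % m = t.1/2 := by
      rw [Nat.add_comm, Nat.add_mul_mod_self_left]
      exact Nat.mod_eq_of_lt (by omega)
    have h5 : (m*i.1 + t.1/2) / m = i.1 := by
      rw [Nat.mul_add_div hm, Nat.div_eq_of_lt (by omega)]
      omega
    rw [h4, h5]; ring
  exact psiE_apply_val' m n hn σvec ⟨t.1/2, by omega⟩
    ⟨2*i.1+t.1%2, by omega⟩ _ hpi

lemma sign_PhiE (m n : ℕ) (hm : 0 < m) (hn : 0 < n)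
    (σvec : Fin m → Equiv.Perm (Fin (2*n))) :
    Equiv.Perm.sign (PhiE m n hm hn σvec) = ∏ s, Equiv.Perm.sign (σvec s) := by
  have h : PhiE m n hm hn σvec = (psiE m n hn σvec) * (piE m n hm hn) := rfl
  rw [h, map_mul]
  have h1 : Equiv.Perm.sign (piE m n hm hn) = 1 := by
    rw [piE, Equiv.Perm.sign_permCongr, Equiv.prodCongr_refl_right,
      Equiv.Perm.sign_prodCongrLeft]
    simp
  have h2 : Equiv.Perm.sign (psiE m n hn σvec) = ∏ s, Equiv.Perm.sign (σvec s) := by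
    rw [psiE, Equiv.Perm.sign_permCongr, Equiv.Perm.sign_prodCongrRight]
  rw [h1, h2, mul_one]

lemma PhiE_injective (m n : ℕ) (hm : 0 < m) (hn : 0 < n) :
    Function.Injective (PhiE m n hm hn) := by
  intro a b h
  have h2 : psiE m n hn a = psiE m n hn b := by
    refine Equiv.ext fun x => ?_
    have h3 := congrArg (fun e : Equiv.Perm (Fin (2*m*n)) =>
      e ((piE m n hm hn).symm x)) h
    simpa [PhiE, Equiv.trans_apply] using h3
  have h4 : Equiv.prodCongrRight a = Equiv.prodCongrRight b :=
    (Equiv.permCongr (eF m n hn)).injective h2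
  funext s
  refine Equiv.ext fun x => ?_
  have := congrArg (fun e : Equiv.Perm (Fin m × Fin (2*n)) => (e (s, x)).2) h4
  simpa using this

lemma PhiE_strictMono (m n : ℕ) (hm : 0 < m) (hn : 0 < n)
    (σvec : Fin m → Equiv.Perm (Fin (2*n))) (hσ : ∀ s, σvec s ∈ Eset n) (i : Fin n) :
    StrictMono (fun t : Fin (2*m) => PhiE m n hm hn σvec (blockIdx i t)) := by
  intro s t hst
  rw [Fin.lt_def] at hst ⊢
  simp only [PhiE_apply_val]
  rcases Nat.lt_or_ge (s.1/2) (t.1/2) with h | h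
  · have hb := (σvec ⟨s.1/2, by have := s.2; omega⟩
      ⟨2*i.1 + s.1%2, by have := i.2; have := s.2; omega⟩).2
    calc 2*n*(s.1/2) + _ < 2*n*(s.1/2) + 2*n := by omega
      _ = 2*n*(s.1/2+1) := by ring
      _ ≤ 2*n*(t.1/2) := Nat.mul_le_mul_left _ h
      _ ≤ _ := Nat.le_add_right _ _
  · have h2 : s.1/2 = t.1/2 := by omega
    have h3 : s.1%2 = 0 := by omega
    have h4 : t.1%2 = 1 := by omega
    have e3 : (⟨t.1/2, by have := t.2; omega⟩ : Fin m)
        = ⟨s.1/2, by have := s.2; omega⟩ := Fin.ext h2.symm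
    have e1 : (⟨2*i.1 + s.1%2, by have := i.2; have := s.2; omega⟩ : Fin (2*n)) = lo i :=
      Fin.ext (by simp [lo, h3])
    have e2 : (⟨2*i.1 + t.1%2, by have := i.2; have := t.2; omega⟩ : Fin (2*n)) = hi i :=
      Fin.ext (by simp [hi, h4])
    rw [e1, e2, e3]
    have hlt := (Finset.mem_filter.mp (hσ ⟨s.1/2, by have := s.2; omega⟩)).2 i
    rw [Fin.lt_def] at hlt
    have h5 : 2*n*(s.1/2) = 2*n*(t.1/2) := by rw [h2]
    omega


lemma cancel_mul_add {k a b c d : ℕ} (hk : 0 < k) (hc : c < k) (hd : d < k)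
    (h : k*a + c = k*b + d) : a = b ∧ c = d := by
  have h1 : (k*a+c)/k = a := by rw [Nat.mul_add_div hk, Nat.div_eq_of_lt hc]; omega
  have h2 : (k*b+d)/k = b := by rw [Nat.mul_add_div hk, Nat.div_eq_of_lt hd]; omega
  have h3 : (k*a+c)%k = c := by rw [Nat.mul_add_mod]; exact Nat.mod_eq_of_lt hc
  have h4 : (k*b+d)%k = d := by rw [Nat.mul_add_mod]; exact Nat.mod_eq_of_lt hd
  constructor
  · rw [← h1, ← h2, h]
  · rw [← h3, ← h4, h]

set_option maxHeartbeats 2000000 in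
lemma exists_preimage (m n : ℕ) (hm : 0 < m) (hn : 0 < n)
    (σ : Equiv.Perm (Fin (2*m*n))) (hσ : σ ∈ EsetB m n)
    (r : Fin n → Fin (2*m) → Fin (2*n))
    (hr : ∀ (i : Fin n) (t : Fin (2*m)),
      (σ (blockIdx i t) : ℕ) = 2*n*(t.1/2) + (r i t : ℕ)) :
    ∃ σvec : Fin m → Equiv.Perm (Fin (2*n)),
      (∀ s, σvec s ∈ Eset n) ∧ PhiE m n hm hn σvec = σ := by
  classical
  set g : Fin m → Fin (2*n) → Fin (2*n) := fun s x =>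
    r ⟨x.1/2, by have := x.2; omega⟩
      ⟨2*s.1 + x.1%2, by have := s.2; have := x.2; omega⟩ with hg_def
  have hg' : ∀ (i : Fin n) (t : Fin (2*m)) (s : Fin m) (x : Fin (2*n)),
      t.1 = 2*s.1 + x.1%2 → i.1 = x.1/2 →
      (σ (blockIdx i t) : ℕ) = 2*n*s.1 + (g s x : ℕ) := by
    intro i t s x ht hi2
    have e0 : blockIdx i t = blockIdx (⟨x.1/2, by have := x.2; omega⟩ : Fin n)
        ⟨2*s.1 + x.1%2, by have := s.2; have := x.2; omega⟩ :=
      Fin.ext (by show 2*m*i.1 + t.1 = 2*m*(x.1/2) + (2*s.1+x.1%2); rw [hi2, ht])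
    rw [e0, hr]
    show 2*n*((2*s.1+x.1%2)/2) + (r ⟨x.1/2, by have := x.2; omega⟩
      ⟨2*s.1 + x.1%2, by have := s.2; have := x.2; omega⟩ : ℕ) = 2*n*s.1 + (g s x : ℕ)
    rw [show (2*s.1+x.1%2)/2 = s.1 from by omega]
  have gInj : ∀ s, Function.Injective (g s) := by
    intro s x y hxy
    have h1 := hg' ⟨x.1/2, by have := x.2; omega⟩
      ⟨2*s.1 + x.1%2, by have := s.2; have := x.2; omega⟩ s x rfl rfl
    have h2 := hg' ⟨y.1/2, by have := y.2; omega⟩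
      ⟨2*s.1 + y.1%2, by have := s.2; have := y.2; omega⟩ s y rfl rfl
    rw [hxy] at h1
    have h3 : σ (blockIdx (⟨x.1/2, by have := x.2; omega⟩ : Fin n)
          ⟨2*s.1 + x.1%2, by have := s.2; have := x.2; omega⟩)
        = σ (blockIdx (⟨y.1/2, by have := y.2; omega⟩ : Fin n)
          ⟨2*s.1 + y.1%2, by have := s.2; have := y.2; omega⟩) :=
      Fin.ext (by omega)
    have h4 := σ.injective h3
    have h5 : 2*m*(x.1/2) + (2*s.1+x.1%2) = 2*m*(y.1/2) + (2*s.1+y.1%2) :=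
      congrArg Fin.val h4
    have h6 : 2*m*(x.1/2) + x.1%2 = 2*m*(y.1/2) + y.1%2 := by
      clear hxy h1 h2 h3 h4; omega
    obtain ⟨hdiv, hmod⟩ := cancel_mul_add (k := 2*m) (a := x.1/2) (b := y.1/2)
      (c := x.1%2) (d := y.1%2) (by omega) (by omega) (by omega) h6
    exact Fin.ext (by clear hxy h1 h2 h3 h4 h5 h6; omega)
  set σs : Fin m → Equiv.Perm (Fin (2*n)) := fun s =>
    Equiv.ofBijective (g s) (Finite.injective_iff_bijective.mp (gInj s)) with hσs
  refine ⟨σs, fun s => ?_, ?_⟩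
  · refine Finset.mem_filter.mpr ⟨Finset.mem_univ _, fun j => ?_⟩
    rw [Fin.lt_def]
    have hE := (Finset.mem_filter.mp hσ).2 j ⟨2*s.1, by have := s.2; omega⟩
      ⟨2*s.1+1, by have := s.2; omega⟩
      (by rw [Fin.lt_def]; show 2*s.1 < 2*s.1+1; omega)
    rw [Fin.lt_def] at hE
    have h1 := hg' j ⟨2*s.1, by have := s.2; omega⟩ s (lo j)
      (by show 2*s.1 = 2*s.1 + (2*j.1)%2; omega)
      (by show j.1 = (2*j.1)/2; omega)
    have h2 := hg' j ⟨2*s.1+1, by have := s.2; omega⟩ s (hi j)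
      (by show 2*s.1+1 = 2*s.1 + (2*j.1+1)%2; omega)
      (by show j.1 = (2*j.1+1)/2; omega)
    have hc1 : ((σs s) (lo j) : ℕ) = (g s (lo j) : ℕ) := rfl
    have hc2 : ((σs s) (hi j) : ℕ) = (g s (hi j) : ℕ) := rfl
    omega
  · refine Equiv.ext fun x => ?_
    have hb1 : x.1/(2*m) < n := by
      have hx2 := x.2
      rw [Nat.div_lt_iff_lt_mul (by omega)]
      have h : 2*m*n = n*(2*m) := by ring
      omega
    have hb2 : x.1 % (2*m) < 2*m := Nat.mod_lt _ (by omega)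
    have hx : blockIdx (⟨x.1/(2*m), hb1⟩ : Fin n) ⟨x.1 % (2*m), hb2⟩ = x :=
      Fin.ext (Nat.div_add_mod x.1 (2*m))
    rw [← hx]
    refine Fin.ext ?_
    rw [PhiE_apply_val]
    have hgt := hg' (⟨x.1/(2*m), hb1⟩ : Fin n) (⟨x.1 % (2*m), hb2⟩ : Fin (2*m))
      ⟨(x.1 % (2*m))/2, by have := hb2; omega⟩
      ⟨2*(x.1/(2*m)) + (x.1 % (2*m))%2, by have := hb1; omega⟩
      (by show x.1 % (2*m) = 2*((x.1 % (2*m))/2)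
            + (2*(x.1/(2*m)) + (x.1 % (2*m))%2)%2
          omega)
      (by show x.1/(2*m) = (2*(x.1/(2*m)) + (x.1 % (2*m))%2)/2; omega)
    exact hgt.symm

set_option maxHeartbeats 2000000 in
/-- The hyperpfaffian `Pf^[2m]` is expressed by Barvinok's hyperpfaffian:
if `M` is the fully antisymmetric array that, on increasing tuples lying in the
blocks `j_{2s-1} = 2n(s-1)+r_{2s-1}`, `j_{2s} = 2n(s-1)+r_{2s}`, takes value
`B(r₁,…,r₂ₘ)` and vanishes on the other increasing tuples, then
`Pf^[2m](B) = PF^[2m](M)`. -/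
theorem hyperpfaffian_eq_barvinok (m n : ℕ) (hm : 0 < m) (hn : 0 < n)
    (B : (Fin (2*m) → Fin (2*n)) → ℂ)
    (hB : ∀ (v : Fin (2*m) → Fin (2*n)) (s : Fin m),
      B (v ∘ (Equiv.swap (lo s) (hi s))) = - B v)
    (M : (Fin (2*m) → Fin (2*m*n)) → ℂ)
    (hM : ∀ (w : Fin (2*m) → Fin (2*m*n)) (τ : Equiv.Perm (Fin (2*m))),
      M (w ∘ τ) = psgn τ * M w)
    (hM1 : ∀ (r : Fin (2*m) → Fin (2*n)) (w : Fin (2*m) → Fin (2*m*n)),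
      StrictMono w → (∀ t : Fin (2*m), (w t : ℕ) = 2*n*(t.1/2) + (r t : ℕ)) →
      M w = B r)
    (hM0 : ∀ w : Fin (2*m) → Fin (2*m*n), StrictMono w →
      (¬ ∃ r : Fin (2*m) → Fin (2*n),
        ∀ t : Fin (2*m), (w t : ℕ) = 2*n*(t.1/2) + (r t : ℕ)) →
      M w = 0) :
    hpf m n B = hpfB m n M := by
  classical
  simp only [hpf, hpfB, smul_eq_mul]
  congr 1
  have hsub : (Fintype.piFinset (fun _ : Fin m => Eset n)).image (PhiE m n hm hn)
      ⊆ EsetB m n := by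
    intro σ hσ
    rw [Finset.mem_image] at hσ
    obtain ⟨σvec, hv, rfl⟩ := hσ
    refine Finset.mem_filter.mpr ⟨Finset.mem_univ _, fun i s t hst => ?_⟩
    exact PhiE_strictMono m n hm hn σvec (fun s => Fintype.mem_piFinset.mp hv s) i hst
  have hvan : ∀ σ ∈ EsetB m n,
      σ ∉ (Fintype.piFinset (fun _ : Fin m => Eset n)).image (PhiE m n hm hn) →
      psgn σ * ∏ i : Fin n, M (fun s => σ (blockIdx i s)) = 0 := by
    intro σ hσ hnot
    by_cases hex : ∀ i : Fin n, ∃ rr : Fin (2*m) → Fin (2*n),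
      ∀ t : Fin (2*m), (σ (blockIdx i t) : ℕ) = 2*n*(t.1/2) + (rr t : ℕ)
    · exfalso
      choose r hr using hex
      obtain ⟨σvec, hmem, heq⟩ := exists_preimage m n hm hn σ hσ r hr
      exact hnot (Finset.mem_image.mpr ⟨σvec, Fintype.mem_piFinset.mpr hmem, heq⟩)
    · push_neg at hex
      obtain ⟨i, hi2⟩ := hex
      have hsm : StrictMono (fun s => σ (blockIdx i s)) := by
        intro s t hst
        exact (Finset.mem_filter.mp hσ).2 i s t hst
      have hz : M (fun s => σ (blockIdx i s)) = 0 := by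
        refine hM0 _ hsm ?_
        rintro ⟨rr, hrr⟩
        obtain ⟨t, ht⟩ := hi2 rr
        exact ht (hrr t)
      rw [Finset.prod_eq_zero (Finset.mem_univ i) hz, mul_zero]
  rw [← Finset.sum_subset hsub hvan,
    Finset.sum_image (fun a _ b _ hab => PhiE_injective m n hm hn hab)]
  refine Finset.sum_congr rfl fun σvec hv => ?_
  have hv' := Fintype.mem_piFinset.mp hv
  have hs : (psgn (PhiE m n hm hn σvec) : ℂ) = ∏ s, (psgn (σvec s) : ℂ) := by
    simp only [psgn, sign_PhiE m n hm hn σvec]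
    rw [show ((∏ s, Equiv.Perm.sign (σvec s) : ℤˣ) : ℤ)
        = ∏ s, ((Equiv.Perm.sign (σvec s) : ℤˣ) : ℤ) from map_prod (Units.coeHom ℤ) _ _,
      Int.cast_prod]
  rw [hs.symm]
  congr 1
  refine Finset.prod_congr rfl fun i _ => ?_
  rw [hM1 (fun t => σvec ⟨t.1/2, by have := t.2; omega⟩
        ⟨2*i.1 + t.1%2, by have := i.2; have := t.2; omega⟩)
      (fun s => PhiE m n hm hn σvec (blockIdx i s))
      (PhiE_strictMono m n hm hn σvec hv' i)
      (fun t => PhiE_apply_val m n hm hn σvec i t)]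
  refine congrArg B (funext fun t => ?_)
  refine congrArg (σvec ⟨t.1/2, by have := t.2; omega⟩) ?_
  by_cases h : t.1 % 2 = 0
  · rw [if_pos h]
    exact Fin.ext (by show 2*i.1 = 2*i.1 + t.1%2; omega)
  · rw [if_neg h]
    exact Fin.ext (by show 2*i.1+1 = 2*i.1 + t.1%2; omega)


end
end
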